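/- arXiv:1901.04786 — 3 statements merged into one kernel-verified Lean document; each statement's English description precedes it below -/
import Mathlib

section
/- Let C ⊆ ℕ be a cohesive set, and let L₀ = (ℕ, ≺₀) and L₁ = (ℕ, ≺₁) be computable linear orders. Let L₀ + L₁ denote the computable linear order on ℕ obtained (via a fixed computable pairing of {0,1} × ℕ with ℕ) by placing a copy of L₀ entirely below a copy of L₁. Then the cohesive power Π_C(L₀ + L₁) is order-isomorphic to the linear order sum Π_C L₀ + Π_C L₁. -/
/-- `X ⊆* Y`: `X` is contained in `Y` up to finitely many elements. -/
def AlmostSubset (X Y : Set ℕ) : Prop := (X \ Y).Finite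

/-- `W ⊆ ℕ` is computably enumerable: it is the domain of a partial computable function. -/
def CESet (W : Set ℕ) : Prop := ∃ f : ℕ →. ℕ, Partrec f ∧ W = f.Dom

/-- `W ⊆ ℕ` is computable (decidable). -/
def ComputableSet (W : Set ℕ) : Prop :=
  ∃ f : ℕ → Bool, Computable f ∧ ∀ n, n ∈ W ↔ f n = true

/-- `C ⊆ ℕ` is cohesive: `C` is infinite, and for every c.e. set `W`, either `W ∩ C`
or `Wᶜ ∩ C` is finite. -/
def Cohesive (C : Set ℕ) : Prop :=
  C.Infinite ∧ ∀ W : Set ℕ, CESet W → (W ∩ C).Finite ∨ (Wᶜ ∩ C).Finite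

/-- `C ⊆ ℕ` is r-cohesive. -/
def RCohesive (C : Set ℕ) : Prop :=
  C.Infinite ∧ ∀ W : Set ℕ, ComputableSet W → (W ∩ C).Finite ∨ (Wᶜ ∩ C).Finite

/-- `C` is co-maximal: its complement is maximal, i.e. `C` is cohesive with c.e. complement. -/
def CoMaximal (C : Set ℕ) : Prop := Cohesive C ∧ CESet Cᶜ

/-- A computable (decidable) binary relation on `ℕ`. -/
def ComputableRel (r : ℕ → ℕ → Prop) : Prop :=
  ∃ f : ℕ → ℕ → Bool, Computable₂ f ∧ ∀ m n, r m n ↔ f m n = true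

/-- `y` is the immediate successor of `x` with respect to the strict order `r`. -/
def ImmSucc {α : Type*} (r : α → α → Prop) (x y : α) : Prop :=
  r x y ∧ ∀ z, ¬(r x z ∧ r z y)

/-- A strict order on `ℕ` has order type ω when it is isomorphic to `(ℕ, <)`. -/
def OrderTypeOmega (r : ℕ → ℕ → Prop) : Prop :=
  Nonempty (r ≃r ((· < ·) : ℕ → ℕ → Prop))

/-- Carrier of the cohesive power: partial computable functions whose domain
almost contains `C`. -/
def CohCarrier (C : Set ℕ) : Type :=
  {φ : ℕ →. ℕ // Partrec φ ∧ (C \ φ.Dom).Finite}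

/-- Two partial functions agree (are defined and equal) on almost all of `C`. -/
def eqAE (C : Set ℕ) (φ ψ : ℕ →. ℕ) : Prop :=
  (C \ {n | ∃ a, a ∈ φ n ∧ a ∈ ψ n}).Finite

/-- The equivalence relation underlying the cohesive power. -/
def cohSetoid (C : Set ℕ) : Setoid (CohCarrier C) where
  r φ ψ := eqAE C φ.1 ψ.1
  iseqv := by
    constructor
    · intro φ
      refine φ.2.2.subset fun n hn => ⟨hn.1, fun hd => hn.2 ?_⟩
      obtain ⟨a, ha⟩ := (PFun.mem_dom _ _).mp hd
      exact ⟨a, ha, ha⟩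
    · intro φ ψ h
      exact h.subset fun n hn => ⟨hn.1, fun ⟨a, h1, h2⟩ => hn.2 ⟨a, h2, h1⟩⟩
    · intro φ ψ χ h1 h2
      refine (h1.union h2).subset fun n hn => ?_
      by_cases hmem : ∃ a, a ∈ φ.1 n ∧ a ∈ ψ.1 n
      · obtain ⟨a, ha1, ha2⟩ := hmem
        refine Or.inr ⟨hn.1, fun ⟨b, hb1, hb2⟩ => hn.2 ⟨a, ha1, ?_⟩⟩
        rwa [Part.mem_unique ha2 hb1]
      · exact Or.inl ⟨hn.1, hmem⟩

/-- The domain of the cohesive power of a computable structure on `ℕ` over `C`. -/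
def CohPow (C : Set ℕ) : Type := Quotient (cohSetoid C)

/-- The class of a partial computable function in the cohesive power. -/
def CohPow.mk {C : Set ℕ} (φ : CohCarrier C) : CohPow C := Quotient.mk (cohSetoid C) φ

/-- `φ(n) ≺ ψ(n)` (both defined) for almost all `n ∈ C`. -/
def ltAE (C : Set ℕ) (r : ℕ → ℕ → Prop) (φ ψ : ℕ →. ℕ) : Prop :=
  (C \ {n | ∃ a b, a ∈ φ n ∧ b ∈ ψ n ∧ r a b}).Finite

/-- The order of the cohesive power of the computable linear order `(ℕ, r)` over `C`. -/
def CohPow.Lt (C : Set ℕ) (r : ℕ → ℕ → Prop) (x y : CohPow C) : Prop :=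
  ∃ φ ψ : CohCarrier C, x = CohPow.mk φ ∧ y = CohPow.mk ψ ∧ ltAE C r φ.1 ψ.1

/-- The sum `L₀ + L₁` of two linear orders on `ℕ`, coded on `ℕ` via the computable
pairing `⟨0, l⟩ ↦ 2l`, `⟨1, l⟩ ↦ 2l + 1`. -/
def sumRel (r₀ r₁ : ℕ → ℕ → Prop) (m n : ℕ) : Prop :=
  (m % 2 = 0 ∧ n % 2 = 1) ∨
  (m % 2 = 0 ∧ n % 2 = 0 ∧ r₀ (m / 2) (n / 2)) ∨
  (m % 2 = 1 ∧ n % 2 = 1 ∧ r₁ (m / 2) (n / 2))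

/-- The lexicographic product `L₀ ×ₗ L₁` (first coordinate dominant) of two linear
orders on `ℕ`, coded on `ℕ` via the computable pairing `Nat.pair`. -/
def lexRel (r₀ r₁ : ℕ → ℕ → Prop) (m n : ℕ) : Prop :=
  r₀ m.unpair.1 n.unpair.1 ∨ (m.unpair.1 = n.unpair.1 ∧ r₁ m.unpair.2 n.unpair.2)

/-- The strict order of `ℕ + ℚ ×ₗ ℤ`. -/
def NQZlt : ℕ ⊕ ℚ × ℤ → ℕ ⊕ ℚ × ℤ → Prop :=
  Sum.Lex (· < ·) (Prod.Lex (· < ·) (· < ·))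

/-- The element of the cohesive power represented by the constant function `k`. -/
def constElt (C : Set ℕ) (k : ℕ) : CohPow C :=
  CohPow.mk ⟨fun _ => Part.some k, Partrec.const' (Part.some k), by
    have : (PFun.Dom fun _ : ℕ => Part.some k) = Set.univ := by
      ext n; simp [PFun.Dom]
    rw [this, Set.diff_univ]; exact Set.finite_empty⟩

/-- The element of the cohesive power represented by the identity function. -/
def idElt (C : Set ℕ) : CohPow C :=
  CohPow.mk ⟨fun n => Part.some n, Partrec.some, by
    have : (PFun.Dom fun n : ℕ => Part.some n) = Set.univ := by
      ext n; simp [PFun.Dom]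
    rw [this, Set.diff_univ]; exact Set.finite_empty⟩

/-!
Doubling the values of a representative, resp. doubling them and adding one, maps `Π_C L₀`,
resp. `Π_C L₁`, into `Π_C (L₀ + L₁)`. Since the sum compares even codes by `≺₀`, odd codes by
`≺₁`, and puts every even code below every odd one, this map is an order embedding of
`Π_C L₀ + Π_C L₁`. It is onto because `{n | φ(n) is even}` is c.e., so by cohesiveness `φ` is
almost always even or almost always odd on `C`, and halving its values gives a preimage.
"For almost all `n ∈ C`" is expressed as `∀ᶠ n in cofinite ⊓ 𝓟 C`.
-/

open Filter

lemma Set.finite_diff_iff_eventually {α : Type*} {C S : Set α} :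
    (C \ S).Finite ↔ ∀ᶠ x in cofinite ⊓ 𝓟 C, x ∈ S := by
  simp only [eventually_inf_principal, eventually_cofinite, Classical.not_imp]
  rfl

section AlmostEverywhere

variable {C : Set ℕ} {φ ψ φ' ψ' : ℕ →. ℕ}

lemma eqAE_iff_eventually :
    eqAE C φ ψ ↔ ∀ᶠ n in cofinite ⊓ 𝓟 C, ∃ a, a ∈ φ n ∧ a ∈ ψ n :=
  Set.finite_diff_iff_eventually

lemma ltAE_iff_eventually {r : ℕ → ℕ → Prop} :
    ltAE C r φ ψ ↔ ∀ᶠ n in cofinite ⊓ 𝓟 C, ∃ a b, a ∈ φ n ∧ b ∈ ψ n ∧ r a b :=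
  Set.finite_diff_iff_eventually

lemma ltAE_eq_iff_eqAE : ltAE C (· = ·) φ ψ ↔ eqAE C φ ψ := by
  simp [ltAE, eqAE]

lemma ltAE.congr {r : ℕ → ℕ → Prop} (h : ltAE C r φ ψ) (hφ : eqAE C φ φ')
    (hψ : eqAE C ψ ψ') : ltAE C r φ' ψ' := by
  rw [ltAE_iff_eventually] at h ⊢
  rw [eqAE_iff_eventually] at hφ hψ
  filter_upwards [h, hφ, hψ] with n ⟨a, b, ha, hb, hab⟩ ⟨a', ha', ha''⟩ ⟨b', hb', hb''⟩
  rw [Part.mem_unique ha ha', Part.mem_unique hb hb'] at hab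
  exact ⟨a', b', ha'', hb'', hab⟩

lemma ltAE_map_map_iff {r s : ℕ → ℕ → Prop} {f g : ℕ → ℕ} (h : ∀ a b, r (f a) (g b) ↔ s a b) :
    ltAE C r (fun n => (φ n).map f) (fun n => (ψ n).map g) ↔ ltAE C s φ ψ := by
  simp [ltAE, Part.mem_map_iff, h]

end AlmostEverywhere

namespace CohCarrier

variable {C : Set ℕ}

lemma eventually_dom (φ : CohCarrier C) : ∀ᶠ n in cofinite ⊓ 𝓟 C, ∃ a, a ∈ φ.1 n := by
  filter_upwards [Set.finite_diff_iff_eventually.mp φ.2.2] with n hn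
  exact Part.dom_iff_mem.mp hn

def map (f : ℕ → ℕ) (hf : Computable f) (φ : CohCarrier C) : CohCarrier C :=
  ⟨fun n => (φ.1 n).map f, φ.2.1.map (hf.comp Computable.snd).to₂, φ.2.2⟩

lemma eqAE_map {f : ℕ → ℕ} (hf : Computable f) {φ ψ : CohCarrier C} (h : eqAE C φ.1 ψ.1) :
    eqAE C (φ.map f hf).1 (ψ.map f hf).1 := by
  rw [eqAE_iff_eventually] at h ⊢
  filter_upwards [h] with n ⟨a, hφ, hψ⟩
  exact ⟨f a, Part.mem_map f hφ, Part.mem_map f hψ⟩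

end CohCarrier

namespace CohPow

variable {C : Set ℕ} {r s : ℕ → ℕ → Prop} {f g : ℕ → ℕ}

lemma mk_eq_mk_iff {φ ψ : CohCarrier C} : mk φ = mk ψ ↔ eqAE C φ.1 ψ.1 :=
  Quotient.eq

lemma lt_mk_mk_iff {φ ψ : CohCarrier C} : CohPow.Lt C r (mk φ) (mk ψ) ↔ ltAE C r φ.1 ψ.1 := by
  refine ⟨fun ⟨φ', ψ', hφ, hψ, h⟩ => h.congr ?_ ?_, fun h => ⟨φ, ψ, rfl, rfl, h⟩⟩
  · exact (cohSetoid C).symm (mk_eq_mk_iff.mp hφ)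
  · exact (cohSetoid C).symm (mk_eq_mk_iff.mp hψ)

@[elab_as_elim]
lemma inductionOn {motive : CohPow C → Prop} (x : CohPow C) (h : ∀ φ, motive (mk φ)) : motive x :=
  Quotient.inductionOn x h

lemma lt_eq_iff {x y : CohPow C} : CohPow.Lt C (· = ·) x y ↔ x = y := by
  induction x using inductionOn
  induction y using inductionOn
  rw [lt_mk_mk_iff, mk_eq_mk_iff, ltAE_eq_iff_eqAE]

lemma lt_true (x y : CohPow C) : CohPow.Lt C (fun _ _ => True) x y := by
  induction x using inductionOn with | h φ => ?_
  induction y using inductionOn with | h ψ => ?_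
  rw [lt_mk_mk_iff, ltAE_iff_eventually]
  filter_upwards [φ.eventually_dom, ψ.eventually_dom] with n ⟨a, ha⟩ ⟨b, hb⟩
  exact ⟨a, b, ha, hb, trivial⟩

lemma not_lt_false (hC : C.Infinite) (x y : CohPow C) : ¬CohPow.Lt C (fun _ _ => False) x y := by
  induction x using inductionOn
  induction y using inductionOn
  rw [lt_mk_mk_iff, ltAE_iff_eventually]
  have := hC.cofinite_inf_principal_neBot
  intro h
  obtain ⟨n, a, b, -, -, hab⟩ := h.exists
  exact hab

def map (f : ℕ → ℕ) (hf : Computable f) : CohPow C → CohPow C :=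
  Quotient.map (CohCarrier.map f hf) fun _ _ => CohCarrier.eqAE_map hf

lemma map_mk (hf : Computable f) (φ : CohCarrier C) : map f hf (mk φ) = mk (φ.map f hf) := rfl

lemma lt_map_map_iff (hf : Computable f) (hg : Computable g) (h : ∀ a b, r (f a) (g b) ↔ s a b)
    {x y : CohPow C} : CohPow.Lt C r (map f hf x) (map g hg y) ↔ CohPow.Lt C s x y := by
  induction x using inductionOn
  induction y using inductionOn
  rw [map_mk, map_mk, lt_mk_mk_iff, lt_mk_mk_iff]
  exact ltAE_map_map_iff h

lemma map_injective (hf : Computable f) (hinj : f.Injective) :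
    Function.Injective (map (C := C) f hf) := fun x y hxy => by
  rwa [← lt_eq_iff, lt_map_map_iff hf hf fun a b => hinj.eq_iff, lt_eq_iff] at hxy

lemma map_ne_map (hC : C.Infinite) (hf : Computable f) (hg : Computable g)
    (hfg : ∀ a b, f a ≠ g b) (x y : CohPow C) : map f hf x ≠ map g hg y := by
  rw [Ne, ← lt_eq_iff, lt_map_map_iff hf hg fun a b => iff_false_intro (hfg a b)]
  exact not_lt_false hC x y

lemma mk_eq_map_mk (hf : Computable f) (hg : Computable g) {φ : CohCarrier C}
    (h : ∀ᶠ n in cofinite ⊓ 𝓟 C, ∀ a ∈ φ.1 n, f (g a) = a) :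
    mk φ = map f hf (mk (φ.map g hg)) := by
  rw [map_mk, mk_eq_mk_iff, eqAE_iff_eventually]
  filter_upwards [h, φ.eventually_dom] with n hfg ⟨a, ha⟩
  exact ⟨a, ha, hfg a ha ▸ Part.mem_map f (Part.mem_map g ha)⟩

end CohPow

lemma Cohesive.eventually_or_eventually_not_mem {C W : Set ℕ} (hC : Cohesive C) (hW : CESet W) :
    (∀ᶠ n in cofinite ⊓ 𝓟 C, n ∈ W) ∨ (∀ᶠ n in cofinite ⊓ 𝓟 C, n ∉ W) := by
  simp only [← Set.mem_compl_iff, ← Set.finite_diff_iff_eventually, Set.sdiff_eq, compl_compl,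
    Set.inter_comm C]
  exact (hC.2 W hW).symm

lemma Cohesive.eventually_or_eventually_not {C : Set ℕ} (hC : Cohesive C) {φ : ℕ →. ℕ}
    (hφ : Partrec φ) {p : ℕ → Bool} (hp : Computable p) :
    (∀ᶠ n in cofinite ⊓ 𝓟 C, ∀ a ∈ φ n, p a) ∨ (∀ᶠ n in cofinite ⊓ 𝓟 C, ∀ a ∈ φ n, ¬p a) := by
  set W := {n | ∃ a ∈ φ n, p a}
  have hW : CESet W := by
    refine ⟨fun n => (φ n).bind fun a => cond (p a) (Part.some a) Part.none,
      hφ.bind (Partrec.cond (hp.comp Computable.snd) (Partrec.some.comp Computable.snd)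
        Partrec.none).to₂, ?_⟩
    ext n
    simp only [W, PFun.Dom, Set.mem_ofPred_eq, Part.dom_iff_mem, Part.mem_bind_iff]
    constructor
    · rintro ⟨a, ha, hpa⟩
      exact ⟨a, a, ha, by simp [hpa]⟩
    · rintro ⟨b, a, ha, hb⟩
      cases hpa : p a
      · simp [hpa] at hb
      · exact ⟨a, ha, hpa⟩
  refine (hC.eventually_or_eventually_not_mem hW).imp (fun h => ?_) (fun h => ?_)
  · filter_upwards [h] with n ⟨a, ha, hpa⟩ b hb
    rwa [Part.mem_unique hb ha]
  · filter_upwards [h] with n hn a ha hpa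
    exact hn ⟨a, ha, hpa⟩

section SumRel

variable {r₀ r₁ : ℕ → ℕ → Prop} {a b : ℕ}

lemma sumRel_double_double : sumRel r₀ r₁ (2 * a) (2 * b) ↔ r₀ a b := by
  simp [sumRel]

lemma sumRel_double_double_succ : sumRel r₀ r₁ (2 * a) (2 * b + 1) := by
  simp [sumRel]

lemma not_sumRel_double_succ_double : ¬sumRel r₀ r₁ (2 * a + 1) (2 * b) := by
  simp [sumRel]

lemma sumRel_double_succ_double_succ : sumRel r₀ r₁ (2 * a + 1) (2 * b + 1) ↔ r₁ a b := by
  simp [sumRel, Nat.mul_add_div]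

end SumRel

section SumEmbed

variable {C : Set ℕ}

def sumEmbed (C : Set ℕ) : CohPow C ⊕ CohPow C → CohPow C :=
  Sum.elim (CohPow.map _ Primrec.nat_double.to_comp)
    (CohPow.map _ Primrec.nat_double_succ.to_comp)

lemma sumEmbed_injective (hC : C.Infinite) : (sumEmbed C).Injective :=
  (CohPow.map_injective _ fun a b h => by omega).sumElim
    (CohPow.map_injective _ fun a b h => by omega) (CohPow.map_ne_map hC _ _ fun a b => by omega)

lemma sumEmbed_surjective (hC : Cohesive C) : (sumEmbed C).Surjective := by
  intro x
  induction x using CohPow.inductionOn with | h φ => ?_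
  rcases hC.eventually_or_eventually_not φ.2.1 Computable.nat_bodd with hodd | heven
  · refine ⟨.inr (CohPow.mk (φ.map _ Computable.nat_div2)), (CohPow.mk_eq_map_mk _ _ ?_).symm⟩
    filter_upwards [hodd] with n h a ha
    have := Nat.bodd_add_div2 a
    simp only [h a ha, Bool.toNat_true] at this
    omega
  · refine ⟨.inl (CohPow.mk (φ.map _ Computable.nat_div2)), (CohPow.mk_eq_map_mk _ _ ?_).symm⟩
    filter_upwards [heven] with n h a ha
    have := Nat.bodd_add_div2 a
    simp only [Bool.not_eq_true] at h
    simp only [h a ha, Bool.toNat_false] at this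
    omega

lemma sumEmbed_lt_iff (hC : C.Infinite) {r₀ r₁ : ℕ → ℕ → Prop} {x y : CohPow C ⊕ CohPow C} :
    CohPow.Lt C (sumRel r₀ r₁) (sumEmbed C x) (sumEmbed C y) ↔
      Sum.Lex (CohPow.Lt C r₀) (CohPow.Lt C r₁) x y := by
  rcases x with x | x <;> rcases y with y | y
  · exact (CohPow.lt_map_map_iff _ _ fun a b => sumRel_double_double).trans Sum.lex_inl_inl.symm
  · refine iff_of_true ?_ (Sum.Lex.sep x y)
    exact (CohPow.lt_map_map_iff _ _ fun a b => iff_true_intro sumRel_double_double_succ).mpr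
      (CohPow.lt_true x y)
  · refine iff_of_false (fun h => ?_) Sum.lex_inr_inl
    exact CohPow.not_lt_false hC x y <|
      (CohPow.lt_map_map_iff _ _ fun a b => iff_false_intro not_sumRel_double_succ_double).mp h
  · exact (CohPow.lt_map_map_iff _ _ fun a b => sumRel_double_succ_double_succ).trans
      Sum.lex_inr_inr.symm

end SumEmbed

theorem cohesivePower_sum_general (C : Set ℕ) (hC : Cohesive C)
    (r₀ r₁ : ℕ → ℕ → Prop) :
    Nonempty (CohPow.Lt C (sumRel r₀ r₁) ≃r
      Sum.Lex (CohPow.Lt C r₀) (CohPow.Lt C r₁)) :=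
  ⟨(RelIso.mk (Equiv.ofBijective _ ⟨sumEmbed_injective hC.1, sumEmbed_surjective hC⟩)
    (sumEmbed_lt_iff hC.1)).symm⟩

/-- The cohesive power of a sum of computable linear orders is the sum of the
cohesive powers. -/
theorem cohesivePower_sum (C : Set ℕ) (hC : Cohesive C)
    (r₀ r₁ : ℕ → ℕ → Prop) (hcomp₀ : ComputableRel r₀) (hcomp₁ : ComputableRel r₁)
    (hsto₀ : IsStrictTotalOrder ℕ r₀) (hsto₁ : IsStrictTotalOrder ℕ r₁) :
    Nonempty (CohPow.Lt C (sumRel r₀ r₁) ≃r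
      Sum.Lex (CohPow.Lt C r₀) (CohPow.Lt C r₁)) :=
  cohesivePower_sum_general C hC r₀ r₁
end

section
/- Let C ⊆ ℕ be a cohesive set, and let L₀ = (ℕ, ≺₀) and L₁ = (ℕ, ≺₁) be computable linear orders. Let L₀ ×ₗ L₁ denote the computable linear order on ℕ obtained (via a fixed computable pairing of ℕ × ℕ with ℕ) as the lexicographic product with the L₀-coordinate dominant. Then the cohesive power Π_C(L₀ ×ₗ L₁) is order-isomorphic to the lexicographic product Π_C L₀ ×ₗ Π_C L₁ (first coordinate dominant). -/
section LexAux

variable {C : Set ℕ}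

/-- First projection on a carrier element. -/
def projF (C : Set ℕ) (φ : CohCarrier C) : CohCarrier C :=
  ⟨fun n => (φ.1 n).map fun a => a.unpair.1,
    φ.2.1.map ((Computable.fst.comp (Computable.unpair.comp Computable.snd)).to₂),
    φ.2.2.subset fun n hn => ⟨hn.1, fun h => hn.2 h⟩⟩

/-- Second projection on a carrier element. -/
def projS (C : Set ℕ) (φ : CohCarrier C) : CohCarrier C :=
  ⟨fun n => (φ.1 n).map fun a => a.unpair.2,
    φ.2.1.map ((Computable.snd.comp (Computable.unpair.comp Computable.snd)).to₂),
    φ.2.2.subset fun n hn => ⟨hn.1, fun h => hn.2 h⟩⟩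

/-- Pairing of two carrier elements. -/
def pairFn (C : Set ℕ) (φ ψ : CohCarrier C) : CohCarrier C :=
  ⟨fun n => (φ.1 n).bind fun a => (ψ.1 n).map fun b => Nat.pair a b,
    φ.2.1.bind <| (ψ.2.1.comp Computable.fst).map
      (((Primrec₂.natPair.comp (Primrec.snd.comp Primrec.fst) Primrec.snd).to_comp).to₂),
    by
      refine (φ.2.2.union ψ.2.2).subset fun n hn => ?_
      by_cases h1 : (φ.1 n).Dom
      · refine Or.inr ⟨hn.1, fun h2 => hn.2 ?_⟩
        obtain ⟨a, ha⟩ := (PFun.mem_dom _ _).mp h1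
        obtain ⟨b, hb⟩ := (PFun.mem_dom _ _).mp h2
        exact (PFun.mem_dom _ _).mpr ⟨Nat.pair a b,
          Part.mem_bind_iff.mpr ⟨a, ha, (Part.mem_map_iff _).mpr ⟨b, hb, rfl⟩⟩⟩
      · exact Or.inl ⟨hn.1, h1⟩⟩

lemma eqAE_symm {φ ψ : ℕ →. ℕ} (h : eqAE C φ ψ) : eqAE C ψ φ :=
  h.subset fun n hn => ⟨hn.1, fun ⟨a, h1, h2⟩ => hn.2 ⟨a, h2, h1⟩⟩

lemma ltAE_congr {r : ℕ → ℕ → Prop} {φ φ' ψ ψ' : ℕ →. ℕ}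
    (h1 : eqAE C φ φ') (h2 : eqAE C ψ ψ') (h : ltAE C r φ ψ) : ltAE C r φ' ψ' := by
  refine ((h1.union h2).union h).subset fun n hn => ?_
  by_contra hcon
  simp only [Set.mem_union, Set.mem_diff, not_or] at hcon
  obtain ⟨⟨hn1, hn2⟩, hn3⟩ := hcon
  obtain ⟨a, haφ, haφ'⟩ := not_not.mp fun h => hn1 ⟨hn.1, h⟩
  obtain ⟨b, hbψ, hbψ'⟩ := not_not.mp fun h => hn2 ⟨hn.1, h⟩
  obtain ⟨x, y, hx, hy, hr⟩ := not_not.mp fun h => hn3 ⟨hn.1, h⟩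
  rw [Part.mem_unique hx haφ] at hr
  rw [Part.mem_unique hy hbψ] at hr
  exact hn.2 ⟨a, b, haφ', hbψ', hr⟩

lemma eqAE_congr {φ φ' ψ ψ' : ℕ →. ℕ}
    (h1 : eqAE C φ φ') (h2 : eqAE C ψ ψ') (h : eqAE C φ ψ) : eqAE C φ' ψ' := by
  refine ((h1.union h2).union h).subset fun n hn => ?_
  by_contra hcon
  simp only [Set.mem_union, Set.mem_diff, not_or] at hcon
  obtain ⟨⟨hn1, hn2⟩, hn3⟩ := hcon
  obtain ⟨a, haφ, haφ'⟩ := not_not.mp fun h => hn1 ⟨hn.1, h⟩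
  obtain ⟨b, hbψ, hbψ'⟩ := not_not.mp fun h => hn2 ⟨hn.1, h⟩
  obtain ⟨x, hx, hy⟩ := not_not.mp fun h => hn3 ⟨hn.1, h⟩
  have hax : a = x := Part.mem_unique haφ hx
  have hbx : b = x := Part.mem_unique hbψ hy
  exact hn.2 ⟨a, haφ', by rw [hax, ← hbx]; exact hbψ'⟩

lemma eqAE_map {g : ℕ → ℕ} {φ ψ : ℕ →. ℕ} (h : eqAE C φ ψ) :
    eqAE C (fun n => (φ n).map g) (fun n => (ψ n).map g) :=
  h.subset fun n hn => ⟨hn.1, fun ⟨a, h1, h2⟩ =>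
    hn.2 ⟨g a, Part.mem_map g h1, Part.mem_map g h2⟩⟩

lemma eqAE_pairFn {φ φ' ψ ψ' : CohCarrier C} (h1 : eqAE C φ.1 φ'.1)
    (h2 : eqAE C ψ.1 ψ'.1) : eqAE C (pairFn C φ ψ).1 (pairFn C φ' ψ').1 :=
  (h1.union h2).subset fun n hn => by
    by_contra hcon
    simp only [Set.mem_union, Set.mem_diff, not_or] at hcon
    obtain ⟨hc1, hc2⟩ := hcon
    obtain ⟨a, ha1, ha2⟩ := not_not.mp fun h => hc1 ⟨hn.1, h⟩
    obtain ⟨b, hb1, hb2⟩ := not_not.mp fun h => hc2 ⟨hn.1, h⟩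
    exact hn.2 ⟨Nat.pair a b,
      Part.mem_bind_iff.mpr ⟨a, ha1, (Part.mem_map_iff _).mpr ⟨b, hb1, rfl⟩⟩,
      Part.mem_bind_iff.mpr ⟨a, ha2, (Part.mem_map_iff _).mpr ⟨b, hb2, rfl⟩⟩⟩

lemma mem_pairFn {φ ψ : CohCarrier C} {n x : ℕ} :
    x ∈ (pairFn C φ ψ).1 n ↔ ∃ a b, a ∈ φ.1 n ∧ b ∈ ψ.1 n ∧ x = Nat.pair a b := by
  constructor
  · intro hx
    obtain ⟨a, ha, hx⟩ := Part.mem_bind_iff.mp hx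
    obtain ⟨b, hb, hx⟩ := (Part.mem_map_iff _).mp hx
    exact ⟨a, b, ha, hb, hx.symm⟩
  · rintro ⟨a, b, ha, hb, rfl⟩
    exact Part.mem_bind_iff.mpr ⟨a, ha, (Part.mem_map_iff _).mpr ⟨b, hb, rfl⟩⟩

/-- Reassembling projections gives back the original function a.e. -/
lemma pair_proj_eqAE (φ : CohCarrier C) :
    eqAE C (pairFn C (projF C φ) (projS C φ)).1 φ.1 :=
  φ.2.2.subset fun n hn => ⟨hn.1, fun h => by
    obtain ⟨a, ha⟩ := (PFun.mem_dom _ _).mp h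
    exact hn.2 ⟨a, mem_pairFn.mpr ⟨a.unpair.1, a.unpair.2, Part.mem_map _ ha,
      Part.mem_map _ ha, (Nat.pair_unpair a).symm⟩, ha⟩⟩

lemma projF_pairFn (φ ψ : CohCarrier C) :
    eqAE C (projF C (pairFn C φ ψ)).1 φ.1 :=
  (φ.2.2.union ψ.2.2).subset fun n hn => by
    by_contra hcon
    simp only [Set.mem_union, Set.mem_diff, not_or] at hcon
    obtain ⟨hc1, hc2⟩ := hcon
    obtain ⟨a, ha⟩ := (PFun.mem_dom _ _).mp (not_not.mp fun h => hc1 ⟨hn.1, h⟩)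
    obtain ⟨b, hb⟩ := (PFun.mem_dom _ _).mp (not_not.mp fun h => hc2 ⟨hn.1, h⟩)
    exact hn.2 ⟨a, (Part.mem_map_iff _).mpr
      ⟨Nat.pair a b, mem_pairFn.mpr ⟨a, b, ha, hb, rfl⟩, by simp⟩, ha⟩

lemma projS_pairFn (φ ψ : CohCarrier C) :
    eqAE C (projS C (pairFn C φ ψ)).1 ψ.1 :=
  (φ.2.2.union ψ.2.2).subset fun n hn => by
    by_contra hcon
    simp only [Set.mem_union, Set.mem_diff, not_or] at hcon
    obtain ⟨hc1, hc2⟩ := hcon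
    obtain ⟨a, ha⟩ := (PFun.mem_dom _ _).mp (not_not.mp fun h => hc1 ⟨hn.1, h⟩)
    obtain ⟨b, hb⟩ := (PFun.mem_dom _ _).mp (not_not.mp fun h => hc2 ⟨hn.1, h⟩)
    exact hn.2 ⟨b, (Part.mem_map_iff _).mpr
      ⟨Nat.pair a b, mem_pairFn.mpr ⟨a, b, ha, hb, rfl⟩, by simp⟩, hb⟩

lemma lex_of_left {r₀ r₁ : ℕ → ℕ → Prop} {φ ψ : CohCarrier C}
    (h : ltAE C r₀ (projF C φ).1 (projF C ψ).1) : ltAE C (lexRel r₀ r₁) φ.1 ψ.1 :=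
  h.subset fun n hn => ⟨hn.1, fun ⟨x, y, hx, hy, hr⟩ => by
    obtain ⟨v, hv, hvx⟩ := (Part.mem_map_iff _).mp hx
    obtain ⟨w, hw, hwy⟩ := (Part.mem_map_iff _).mp hy
    exact hn.2 ⟨v, w, hv, hw, Or.inl (by rw [hvx, hwy]; exact hr)⟩⟩

lemma lex_of_right {r₀ r₁ : ℕ → ℕ → Prop} {φ ψ : CohCarrier C}
    (he : eqAE C (projF C φ).1 (projF C ψ).1)
    (h : ltAE C r₁ (projS C φ).1 (projS C ψ).1) : ltAE C (lexRel r₀ r₁) φ.1 ψ.1 := by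
  refine (he.union h).subset fun n hn => ?_
  by_contra hcon
  simp only [Set.mem_union, Set.mem_diff, not_or] at hcon
  obtain ⟨hc1, hc2⟩ := hcon
  obtain ⟨a, ha1, ha2⟩ := not_not.mp fun h => hc1 ⟨hn.1, h⟩
  obtain ⟨c, d, hc, hd, hr⟩ := not_not.mp fun h => hc2 ⟨hn.1, h⟩
  obtain ⟨v, hv, hva⟩ := (Part.mem_map_iff _).mp ha1
  obtain ⟨w, hw, hwa⟩ := (Part.mem_map_iff _).mp ha2
  obtain ⟨v', hv', hvc⟩ := (Part.mem_map_iff _).mp hc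
  obtain ⟨w', hw', hwd⟩ := (Part.mem_map_iff _).mp hd
  have hvv : v' = v := Part.mem_unique hv' hv
  have hww : w' = w := Part.mem_unique hw' hw
  refine hn.2 ⟨v, w, hv, hw, Or.inr ⟨by rw [hva, hwa], ?_⟩⟩
  rw [← hvc, ← hwd, hvv, hww] at hr
  exact hr

lemma lex_split (hC : Cohesive C) {r₀ r₁ : ℕ → ℕ → Prop} (hcomp₀ : ComputableRel r₀)
    (φ ψ : CohCarrier C) (h : ltAE C (lexRel r₀ r₁) φ.1 ψ.1) :
    ltAE C r₀ (projF C φ).1 (projF C ψ).1 ∨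
      (eqAE C (projF C φ).1 (projF C ψ).1 ∧
        ltAE C r₁ (projS C φ).1 (projS C ψ).1) := by
  obtain ⟨f₀, hf₀c, hf₀⟩ := hcomp₀
  set g : ℕ →. ℕ := fun n => (φ.1 n).bind fun a => (ψ.1 n).bind fun b =>
    bif f₀ a.unpair.1 b.unpair.1 then Part.some 0 else Part.none with hg
  have pg : Partrec g := by
    have h1 : Partrec fun q : (ℕ × ℕ) × ℕ =>
        bif f₀ q.1.2.unpair.1 q.2.unpair.1 then Part.some (0 : ℕ) else Part.none :=
      Partrec.cond
        (hf₀c.comp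
          (Computable.fst.comp (Computable.unpair.comp (Computable.snd.comp Computable.fst)))
          (Computable.fst.comp (Computable.unpair.comp Computable.snd)))
        (Partrec.const' (Part.some 0)) Partrec.none
    have h2 : Partrec fun p : ℕ × ℕ => (ψ.1 p.1).bind fun b =>
        bif f₀ p.2.unpair.1 b.unpair.1 then Part.some (0 : ℕ) else Part.none :=
      (ψ.2.1.comp Computable.fst).bind h1.to₂
    exact φ.2.1.bind h2.to₂
  have hWmem : ∀ n, n ∈ g.Dom ↔
      ∃ a b, a ∈ φ.1 n ∧ b ∈ ψ.1 n ∧ r₀ a.unpair.1 b.unpair.1 := by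
    intro n
    rw [PFun.mem_dom]
    constructor
    · rintro ⟨y, hy⟩
      obtain ⟨a, ha, hy⟩ := Part.mem_bind_iff.mp hy
      obtain ⟨b, hb, hy⟩ := Part.mem_bind_iff.mp hy
      refine ⟨a, b, ha, hb, (hf₀ _ _).mpr ?_⟩
      cases hb0 : f₀ a.unpair.1 b.unpair.1 with
      | false => rw [hb0] at hy; exact absurd hy (Part.notMem_none y)
      | true => rfl
    · rintro ⟨a, b, ha, hb, hr⟩
      refine ⟨0, Part.mem_bind_iff.mpr ⟨a, ha, Part.mem_bind_iff.mpr ⟨b, hb, ?_⟩⟩⟩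
      rw [(hf₀ _ _).mp hr]
      exact Part.mem_some 0
  rcases hC.2 g.Dom ⟨g, pg, rfl⟩ with hfin | hfin
  · -- g.Dom ∩ C finite: first coordinates agree a.e., second coordinates r₁-increase
    refine Or.inr ⟨?_, ?_⟩
    · refine ((hfin.union h).subset fun n hn => ?_)
      by_cases hW : n ∈ g.Dom
      · exact Or.inl ⟨hW, hn.1⟩
      · refine Or.inr ⟨hn.1, fun ⟨a, b, ha, hb, hlex⟩ => ?_⟩
        rcases hlex with hr0 | ⟨heq, _⟩
        · exact hW ((hWmem n).mpr ⟨a, b, ha, hb, hr0⟩)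
        · exact hn.2 ⟨a.unpair.1, Part.mem_map _ ha, heq ▸ Part.mem_map _ hb⟩
    · refine ((hfin.union h).subset fun n hn => ?_)
      by_cases hW : n ∈ g.Dom
      · exact Or.inl ⟨hW, hn.1⟩
      · refine Or.inr ⟨hn.1, fun ⟨a, b, ha, hb, hlex⟩ => ?_⟩
        rcases hlex with hr0 | ⟨_, hr1⟩
        · exact hW ((hWmem n).mpr ⟨a, b, ha, hb, hr0⟩)
        · exact hn.2 ⟨a.unpair.2, b.unpair.2, Part.mem_map _ ha, Part.mem_map _ hb, hr1⟩
  · -- g.Domᶜ ∩ C finite: r₀ holds a.e. on first coordinates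
    refine Or.inl (hfin.subset fun n hn => ⟨?_, hn.1⟩)
    intro hmem
    obtain ⟨a, b, ha, hb, hr⟩ := (hWmem n).mp hmem
    exact hn.2 ⟨a.unpair.1, b.unpair.1, Part.mem_map _ ha, Part.mem_map _ hb, hr⟩

end LexAux

/-- The cohesive power of a lexicographic product of computable linear orders is the
lexicographic product of the cohesive powers. -/
theorem cohesivePower_lexProd (C : Set ℕ) (hC : Cohesive C)
    (r₀ r₁ : ℕ → ℕ → Prop) (hcomp₀ : ComputableRel r₀) (hcomp₁ : ComputableRel r₁)
    (hsto₀ : IsStrictTotalOrder ℕ r₀) (hsto₁ : IsStrictTotalOrder ℕ r₁) :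
    Nonempty (CohPow.Lt C (lexRel r₀ r₁) ≃r
      Prod.Lex (CohPow.Lt C r₀) (CohPow.Lt C r₁)) := by
  classical
  let F : CohPow C → CohPow C × CohPow C :=
    Quotient.lift (fun φ => (CohPow.mk (projF C φ), CohPow.mk (projS C φ)))
      (fun φ ψ h => Prod.ext (Quotient.sound (eqAE_map h)) (Quotient.sound (eqAE_map h)))
  let G : CohPow C × CohPow C → CohPow C := fun p =>
    Quotient.lift₂ (fun φ ψ => CohPow.mk (pairFn C φ ψ))
      (fun a b a' b' h1 h2 => Quotient.sound (eqAE_pairFn h1 h2)) p.1 p.2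
  have hleft : Function.LeftInverse G F := fun x =>
    Quotient.inductionOn x fun φ => Quotient.sound (pair_proj_eqAE φ)
  have hright : Function.RightInverse G F := by
    rintro ⟨x, y⟩
    refine Quotient.inductionOn₂ x y fun φ ψ => ?_
    exact Prod.ext (Quotient.sound (projF_pairFn φ ψ)) (Quotient.sound (projS_pairFn φ ψ))
  refine ⟨⟨⟨F, G, hleft, hright⟩, ?_⟩⟩
  intro x y
  refine Quotient.inductionOn₂ x y fun φ ψ => ?_
  constructor
  · intro h
    rcases Prod.lex_def.mp h with h0 | ⟨heq, h1⟩
    · obtain ⟨α, β, hx, hy, hlt⟩ := h0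
      have hα : eqAE C α.1 (projF C φ).1 := eqAE_symm (Quotient.exact hx)
      have hβ : eqAE C β.1 (projF C ψ).1 := eqAE_symm (Quotient.exact hy)
      exact ⟨φ, ψ, rfl, rfl, lex_of_left (ltAE_congr hα hβ hlt)⟩
    · obtain ⟨α, β, hx, hy, hlt⟩ := h1
      have hα : eqAE C α.1 (projS C φ).1 := eqAE_symm (Quotient.exact hx)
      have hβ : eqAE C β.1 (projS C ψ).1 := eqAE_symm (Quotient.exact hy)
      have he : eqAE C (projF C φ).1 (projF C ψ).1 := Quotient.exact heq
      exact ⟨φ, ψ, rfl, rfl, lex_of_right he (ltAE_congr hα hβ hlt)⟩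
  · intro h
    obtain ⟨α, β, hx, hy, hlt⟩ := h
    have hα : eqAE C α.1 φ.1 := eqAE_symm (Quotient.exact hx)
    have hβ : eqAE C β.1 ψ.1 := eqAE_symm (Quotient.exact hy)
    have hlt' : ltAE C (lexRel r₀ r₁) φ.1 ψ.1 := ltAE_congr hα hβ hlt
    rcases lex_split hC hcomp₀ φ ψ hlt' with h0 | ⟨he, h1⟩
    · exact Prod.lex_def.mpr (Or.inl ⟨projF C φ, projF C ψ, rfl, rfl, h0⟩)
    · exact Prod.lex_def.mpr (Or.inr ⟨Quotient.sound he,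
        ⟨projS C φ, projS C ψ, rfl, rfl, h1⟩⟩)
end

section
/- For every co-maximal set C ⊆ ℕ there exist computable ternary relations P, Q ⊆ ℕ³ such that the structures (ℕ, P) and (ℕ, Q) are isomorphic (there is a bijection of ℕ carrying P onto Q), but the cohesive powers Π_C(ℕ, P) and Π_C(ℕ, Q) are not isomorphic. -/
/-- A computable (decidable) ternary relation on `ℕ`. -/
def ComputableRel3 (P : ℕ → ℕ → ℕ → Prop) : Prop :=
  ∃ f : ℕ × ℕ × ℕ → Bool, Computable f ∧ ∀ a b c, P a b c ↔ f (a, b, c) = true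

/-- `P(φ(n), ψ(n), χ(n))` (all defined) for almost all `n ∈ C`. -/
def rel3AE (C : Set ℕ) (P : ℕ → ℕ → ℕ → Prop) (φ ψ χ : ℕ →. ℕ) : Prop :=
  (C \ {n | ∃ a b c, a ∈ φ n ∧ b ∈ ψ n ∧ c ∈ χ n ∧ P a b c}).Finite

/-- The ternary relation of the cohesive power of the computable structure `(ℕ, P)`. -/
def CohPow.Rel3 (C : Set ℕ) (P : ℕ → ℕ → ℕ → Prop) (x y z : CohPow C) : Prop :=
  ∃ φ ψ χ : CohCarrier C, x = CohPow.mk φ ∧ y = CohPow.mk ψ ∧ z = CohPow.mk χ ∧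
    rel3AE C P φ.1 ψ.1 χ.1


namespace CPW

open Nat.Partrec (Code)
open Nat.Partrec.Code


/-- Stage-`s` approximation to membership in the domain of `eval c`. -/
def mIn (c : Code) (m s : ℕ) : Bool := (evaln s c m).isSome

lemma mIn_mono {c : Code} {m s t : ℕ} (h : s ≤ t) (hm : mIn c m s = true) :
    mIn c m t = true := by
  unfold mIn at *
  rw [Option.isSome_iff_exists] at hm ⊢
  obtain ⟨x, hx⟩ := hm
  exact ⟨x, evaln_mono h hx⟩

lemma mIn_bound {c : Code} {m s : ℕ} (hm : mIn c m s = true) : m < s := by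
  unfold mIn at hm
  rw [Option.isSome_iff_exists] at hm
  obtain ⟨x, hx⟩ := hm
  exact evaln_bound hx

lemma mIn_zero (c : Code) (m : ℕ) : mIn c m 0 = false := by
  cases h : mIn c m 0
  · rfl
  · exact absurd (mIn_bound h) (Nat.not_lt_zero m)

lemma mIn_iff_dom {c : Code} {m : ℕ} : (∃ s, mIn c m s = true) ↔ ((eval c) m).Dom := by
  constructor
  · rintro ⟨s, hs⟩
    unfold mIn at hs
    rw [Option.isSome_iff_exists] at hs
    obtain ⟨x, hx⟩ := hs
    exact Part.dom_iff_mem.2 ⟨x, evaln_complete.2 ⟨s, hx⟩⟩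
  · intro h
    obtain ⟨x, hx⟩ := Part.dom_iff_mem.1 h
    obtain ⟨s, hs⟩ := evaln_complete.1 hx
    exact ⟨s, by unfold mIn; rw [Option.isSome_iff_exists]; exact ⟨x, hs⟩⟩

lemma mIn_computable (c : Code) : Computable₂ (mIn c) :=
  (Primrec.option_isSome.comp
    ((Nat.Partrec.Code.primrec_evaln).comp
      (((Primrec.snd).pair (Primrec.const c)).pair Primrec.fst))).to_comp.to₂

/-- helper: `Nat.find` of a computable predicate with computable existence is computable. -/
lemma computable_nat_find {α : Type} [Primcodable α] {p : α → ℕ → Bool}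
    (hp : Computable₂ p) (H : ∀ a, ∃ n, p a n = true) :
    Computable fun a => Nat.find (H a) := by
  have h1 : Partrec fun a => Nat.rfind fun n => (Part.some (p a n) : Part Bool) :=
    Partrec.rfind (Computable₂.partrec₂ hp)
  have h2 : ∀ a, (Nat.rfind fun n => (Part.some (p a n) : Part Bool)) =
      Part.some (Nat.find (H a)) := by
    intro a
    apply Part.eq_some_iff.2
    refine Nat.mem_rfind.2 ?_
    constructor
    · simpa using Nat.find_spec (H a)
    · intro m hm
      simpa using Nat.find_min (H a) hm
  exact (h1.of_eq h2)

lemma nx_ex (c : Code) (n s : ℕ) : ∃ i, (!mIn c (n + 1 + i) s) = true := by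
  refine ⟨s, ?_⟩
  rw [Bool.not_eq_true']
  cases h : mIn c (n + 1 + s) s
  · rfl
  · exact absurd (mIn_bound h) (by omega)

/-- `nx c n s` : the least `m > n` not in the stage-`s` approximation. -/
def nx (c : Code) (n s : ℕ) : ℕ := n + 1 + Nat.find (nx_ex c n s)

lemma nx_gt (c : Code) (n s : ℕ) : n < nx c n s := by unfold nx; omega

lemma nx_not_mem (c : Code) (n s : ℕ) : mIn c (nx c n s) s = false := by
  have := Nat.find_spec (nx_ex c n s)
  rwa [Bool.not_eq_true'] at this

lemma nx_min {c : Code} {n s m : ℕ} (h1 : n < m) (h2 : m < nx c n s) :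
    mIn c m s = true := by
  have hi : m = n + 1 + (m - n - 1) := by omega
  have h3 := Nat.find_min (nx_ex c n s) (m := m - n - 1) (by unfold nx at h2; omega)
  cases h : mIn c m s
  · exact absurd (by rw [← hi]; simp [h]) h3
  · rfl

lemma nx_le {c : Code} {n s m : ℕ} (h1 : n < m) (h2 : mIn c m s = false) :
    nx c n s ≤ m := by
  by_contra h
  push_neg at h
  rw [nx_min h1 h] at h2
  exact absurd h2 (by simp)

lemma nx_computable (c : Code) : Computable₂ (nx c) := by
  have hfind : Computable fun p : ℕ × ℕ => Nat.find (nx_ex c p.1 p.2) := by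
    apply computable_nat_find (p := fun (p : ℕ × ℕ) i => !mIn c (p.1 + 1 + i) p.2)
    exact (Primrec.not.to_comp.comp ((mIn_computable c).comp
      ((Primrec.nat_add.comp (Primrec.nat_add.comp (Primrec.fst.comp .fst)
        (Primrec.const 1)) Primrec.snd).to_comp)
      (Primrec.snd.comp Primrec.fst).to_comp)).to₂
  exact ((Primrec.nat_add.to_comp.comp
    (Primrec.nat_add.to_comp.comp (Computable.fst) (Computable.const 1)) hfind)).to₂



def isW (c : Code) (x : ℕ) : Bool :=
  (1 ≤ x.unpair.2) && (nx c x.unpair.1 x.unpair.2 != nx c x.unpair.1 (x.unpair.2 - 1))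

def pkey (c : Code) (x : ℕ) : ℕ :=
  bif isW c x then Nat.pair x.unpair.1 0 else x

def lb (c : Code) (x y : ℕ) : Bool :=
  (pkey c x < pkey c y) ||
    ((pkey c x == pkey c y) &&
      ((!isW c x && isW c y) || (isW c x && isW c y && (y.unpair.2 < x.unpair.2))))

def decf (c : Code) (n v : ℕ) : ℕ :=
  bif isW c v && (v.unpair.1 == n) then nx c n v.unpair.2 else n + 1

lemma isW_def (c : Code) (x : ℕ) : isW c x =
    ((1 ≤ x.unpair.2) && (nx c x.unpair.1 x.unpair.2 != nx c x.unpair.1 (x.unpair.2 - 1))) := rfl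

lemma pkey_def (c : Code) (x : ℕ) : pkey c x =
    (bif isW c x then Nat.pair x.unpair.1 0 else x) := rfl

lemma lb_def (c : Code) (x y : ℕ) : lb c x y =
    ((pkey c x < pkey c y) ||
      ((pkey c x == pkey c y) &&
        ((!isW c x && isW c y) || (isW c x && isW c y && (y.unpair.2 < x.unpair.2))))) := rfl

lemma decf_def (c : Code) (n v : ℕ) : decf c n v =
    (bif isW c v && (v.unpair.1 == n) then nx c n v.unpair.2 else n + 1) := rfl

private lemma hband : Computable₂ (· && · : Bool → Bool → Bool) :=
  (Primrec.dom_bool₂ _).to_comp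
private lemma hbor : Computable₂ (· || · : Bool → Bool → Bool) :=
  (Primrec.dom_bool₂ _).to_comp
private lemma hnot : Computable (not) := (Primrec.dom_bool _).to_comp
private lemma hbeq : Computable₂ (· == · : ℕ → ℕ → Bool) := Primrec.beq.to_comp
private lemma hu1 : Computable fun x : ℕ => x.unpair.1 :=
  (Primrec.fst.comp Primrec.unpair).to_comp
private lemma hu2 : Computable fun x : ℕ => x.unpair.2 :=
  (Primrec.snd.comp Primrec.unpair).to_comp
private lemma hlt : Computable₂ fun a b : ℕ => decide (a < b) := Primrec.nat_lt.decide.to_comp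
private lemma hle : Computable₂ fun a b : ℕ => decide (a ≤ b) := Primrec.nat_le.decide.to_comp

lemma isW_computable (c : Code) : Computable (isW c) := by
  unfold isW
  refine hband.comp ?_ ?_
  · exact hle.comp (Computable.const 1) hu2
  · refine hnot.comp (hbeq.comp ?_ ?_)
    · exact (nx_computable c).comp hu1 hu2
    · exact (nx_computable c).comp hu1 (Primrec.nat_sub.to_comp.comp hu2 (Computable.const 1))

lemma pkey_computable (c : Code) : Computable (pkey c) := by
  unfold pkey
  exact Computable.cond (isW_computable c)
    (Primrec₂.natPair.to_comp.comp hu1 (Computable.const 0)) Computable.id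

set_option maxHeartbeats 1000000 in
lemma lb_computable (c : Code) : Computable₂ (lb c) := by
  unfold lb
  have hkx : Computable fun p : ℕ × ℕ => pkey c p.1 := (pkey_computable c).comp .fst
  have hky : Computable fun p : ℕ × ℕ => pkey c p.2 := (pkey_computable c).comp .snd
  have hwx : Computable fun p : ℕ × ℕ => isW c p.1 := (isW_computable c).comp .fst
  have hwy : Computable fun p : ℕ × ℕ => isW c p.2 := (isW_computable c).comp .snd
  have h1 : Computable fun p : ℕ × ℕ => (decide (pkey c p.1 < pkey c p.2)) := hlt.comp hkx hky
  have h2 : Computable fun p : ℕ × ℕ => (pkey c p.1 == pkey c p.2) := hbeq.comp hkx hky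
  have h3 : Computable fun p : ℕ × ℕ => (!isW c p.1 && isW c p.2) :=
    hband.comp (hnot.comp hwx) hwy
  have h5 : Computable fun p : ℕ × ℕ => (decide (p.2.unpair.2 < p.1.unpair.2)) :=
    hlt.comp (hu2.comp .snd) (hu2.comp .fst)
  have h4 : Computable fun p : ℕ × ℕ => (isW c p.1 && isW c p.2 && decide (p.2.unpair.2 < p.1.unpair.2)) :=
    hband.comp (hband.comp hwx hwy) h5
  exact (hbor.comp h1 (hband.comp h2 (hbor.comp h3 h4))).to₂

lemma decf_computable (c : Code) : Computable₂ (decf c) := by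
  unfold decf
  refine (Computable.cond (hband.comp ((isW_computable c).comp .snd)
    (hbeq.comp (hu1.comp .snd) .fst))
    ((nx_computable c).comp .fst (hu2.comp .snd))
    (Primrec.nat_add.to_comp.comp .fst (Computable.const 1))).to₂

/-- `s` is a change stage for `n`. -/
def chgP (c : Code) (n s : ℕ) : Prop := 1 ≤ s ∧ nx c n s ≠ nx c n (s - 1)

lemma isW_iff {c : Code} {x : ℕ} : isW c x = true ↔ chgP c x.unpair.1 x.unpair.2 := by
  rw [isW_def]
  simp [chgP, Bool.and_eq_true, decide_eq_true_iff, bne_iff_ne]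

lemma isW_pair {c : Code} {n s : ℕ} : isW c (Nat.pair n s) = true ↔ chgP c n s := by
  rw [isW_iff, Nat.unpair_pair]

lemma isW_anchor (c : Code) (n : ℕ) : isW c (Nat.pair n 0) = false := by
  cases h : isW c (Nat.pair n 0)
  · rfl
  · exact absurd ((isW_pair.1 h).1) (by omega)

lemma nx_zero (c : Code) (n : ℕ) : nx c n 0 = n + 1 := by
  have h1 := nx_le (c := c) (n := n) (s := 0) (m := n + 1) (by omega) (mIn_zero c (n + 1))
  have h2 := nx_gt c n 0
  omega

section WithH

variable (c : Code) (H : ∀ n : ℕ, ∃ m, n < m ∧ ¬((eval c) m).Dom)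

open scoped Classical

/-- The least `m > n` outside the domain of `eval c`. -/
noncomputable def nextc (n : ℕ) : ℕ := Nat.find (H n)

lemma nextc_gt (n : ℕ) : n < nextc c H n := (Nat.find_spec (H n)).1

lemma nextc_not_dom (n : ℕ) : ¬((eval c) (nextc c H n)).Dom := (Nat.find_spec (H n)).2


lemma nextc_le {n m : ℕ} (h1 : n < m) (h2 : ¬((eval c) m).Dom) : nextc c H n ≤ m :=
  Nat.find_min' (H n) ⟨h1, h2⟩

lemma nextc_min {n m : ℕ} (h1 : n < m) (h2 : m < nextc c H n) : ((eval c) m).Dom := by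
  have := Nat.find_min (H n) h2
  push_neg at this
  exact this h1

/-- A stage by which the interval `(n, nextc n)` has settled. -/
noncomputable def sbd (n : ℕ) : ℕ :=
  (Finset.range (nextc c H n)).sup fun j =>
    if h : ((eval c) j).Dom then Nat.find (mIn_iff_dom.mpr h) else 0

lemma sbd_spec {n j : ℕ} (h1 : n < j) (h2 : j < nextc c H n) {s : ℕ}
    (hs : sbd c H n ≤ s) : mIn c j s = true := by
  have hd : ((eval c) j).Dom := nextc_min c H h1 h2
  have hex : ∃ t, mIn c j t = true := mIn_iff_dom.2 hd
  have hfind : mIn c j (Nat.find hex) = true := Nat.find_spec hex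
  have hle : Nat.find hex ≤ sbd c H n := by
    have hmem : j ∈ Finset.range (nextc c H n) := Finset.mem_range.2 h2
    have h4 : Nat.find hex ≤ (if h : ((eval c) j).Dom then Nat.find (mIn_iff_dom.mpr h) else 0) := by
      rw [dif_pos hd]
    unfold sbd
    exact le_trans h4 (Finset.le_sup
      (f := fun j => if h : ((eval c) j).Dom then Nat.find (mIn_iff_dom.mpr h) else 0) hmem)
  exact mIn_mono (le_trans hle hs) hfind

lemma stab {n s : ℕ} (hs : sbd c H n ≤ s) : nx c n s = nextc c H n := by
  have h1 : nx c n s ≤ nextc c H n := by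
    apply nx_le (nextc_gt c H n)
    cases h : mIn c (nextc c H n) s
    · rfl
    · exact absurd (mIn_iff_dom.1 ⟨s, h⟩) (nextc_not_dom c H n)
  rcases lt_trichotomy (nx c n s) (nextc c H n) with h | h | h
  · have := sbd_spec c H (nx_gt c n s) h hs
    rw [nx_not_mem] at this
    exact absurd this (by simp)
  · exact h
  · omega

lemma chg_le_sbd {n s : ℕ} (h : chgP c n s) : s ≤ sbd c H n := by
  by_contra hh
  push_neg at hh
  have h1 : nx c n s = nextc c H n := stab c H (by omega)
  have h2 : nx c n (s - 1) = nextc c H n := stab c H (by omega)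
  exact h.2 (h1.trans h2.symm)

lemma no_chg_nextc {n : ℕ} (h : ∀ s, ¬chgP c n s) : nextc c H n = n + 1 := by
  have key : ∀ s, nx c n s = n + 1 := by
    intro s
    induction s with
    | zero => exact nx_zero c n
    | succ t ih =>
      have := h (t + 1)
      simp only [chgP, not_and_or] at this
      rcases this with h' | h'
      · omega
      · push_neg at h'
        simpa [ih] using h'
  rw [← stab c H (le_refl (sbd c H n)), key]

/-- The largest change stage for `n` (when one exists). -/
noncomputable def smax (n : ℕ) : ℕ := Nat.findGreatest (chgP c n) (sbd c H n)

lemma smax_chg {n s : ℕ} (h : chgP c n s) : chgP c n (smax c H n) :=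
  Nat.findGreatest_spec (chg_le_sbd c H h) h

lemma le_smax {n s : ℕ} (h : chgP c n s) : s ≤ smax c H n :=
  Nat.le_findGreatest (chg_le_sbd c H h) h

lemma nx_smax {n s₀ : ℕ} (h : chgP c n s₀) : nx c n (smax c H n) = nextc c H n := by
  have key : ∀ t, smax c H n ≤ t → nx c n t = nx c n (smax c H n) := by
    intro t ht
    induction t with
    | zero => simp_all
    | succ u ih =>
      rcases Nat.lt_or_ge (smax c H n) (u + 1) with h' | h'
      · have hnc : ¬chgP c n (u + 1) := fun hc => absurd (le_smax c H hc) (by omega)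
        simp only [chgP, not_and_or] at hnc
        rcases hnc with h'' | h''
        · omega
        · push_neg at h''
          simp only [Nat.add_sub_cancel] at h''
          rcases Nat.eq_or_lt_of_le ht with he | hl
          · rw [← he]
          · rw [h'', ih (by omega)]
      · have : smax c H n = u + 1 := by omega
        rw [this]
  have h1 := key (max (sbd c H n) (smax c H n)) (le_max_right _ _)
  rw [stab c H (le_max_left _ _)] at h1
  exact h1.symm

/-- order key into `ℕ ×ₗ ℕ`. -/
noncomputable def kf (x : ℕ) : ℕ × ℕ :=
  (pkey c x, if isW c x = true then sbd c H (x.unpair.1) + 1 - x.unpair.2 else 0)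

/-- lexicographic order on pairs -/
def rl (p q : ℕ × ℕ) : Prop := p.1 < q.1 ∨ (p.1 = q.1 ∧ p.2 < q.2)

lemma rl_trans {p q r : ℕ × ℕ} (h1 : rl p q) (h2 : rl q r) : rl p r := by
  unfold rl at *; omega

lemma rl_irrefl (p : ℕ × ℕ) : ¬rl p p := by unfold rl; omega

lemma rl_trichot (p q : ℕ × ℕ) : rl p q ∨ p = q ∨ rl q p := by
  unfold rl
  rcases p with ⟨a, b⟩; rcases q with ⟨a', b'⟩
  simp only [Prod.mk.injEq]
  omega

lemma isW_bounds {x : ℕ} (hw : isW c x = true) :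
    1 ≤ x.unpair.2 ∧ x.unpair.2 ≤ sbd c H (x.unpair.1) := by
  have h := isW_iff.1 hw
  exact ⟨h.1, chg_le_sbd c H h⟩

lemma pkey_owner {x : ℕ} (hw : isW c x = true) : pkey c x = Nat.pair x.unpair.1 0 := by
  rw [pkey_def, hw]; rfl

lemma pkey_id {x : ℕ} (hw : isW c x = false) : pkey c x = x := by
  rw [pkey_def, hw]; rfl

lemma lb_iff {x y : ℕ} : lb c x y = true ↔ rl (kf c H x) (kf c H y) := by
  rw [lb_def]
  simp only [Bool.or_eq_true, Bool.and_eq_true, decide_eq_true_iff, beq_iff_eq,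
    Bool.not_eq_true']
  unfold kf rl
  simp only []
  rcases lt_trichotomy (pkey c x) (pkey c y) with hk | hk | hk
  · constructor
    · intro _; exact Or.inl hk
    · intro _; exact Or.inl hk
  · have hne : ¬pkey c x < pkey c y := by omega
    simp only [hne, false_or, hk, true_and]
    cases hwx : isW c x <;> cases hwy : isW c y
    · simp
    · have hby := isW_bounds c H (x := y) hwy
      simp only [hwx, hwy, Bool.false_eq_true, Bool.true_eq_false, if_true, if_false,
        ite_true, ite_false]
      simp only [true_and, and_true, false_and, and_false, or_false, false_or]
      constructor
      · intro _; exact Or.inr (by omega)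
      · intro _; exact Or.inr trivial
    · have hbx := isW_bounds c H (x := x) hwx
      simp only [hwx, hwy, Bool.false_eq_true, Bool.true_eq_false, if_true, if_false,
        ite_true, ite_false]
      simp only [true_and, and_true, false_and, and_false, or_false, false_or]
      omega
    · have hbx := isW_bounds c H (x := x) hwx
      have hby := isW_bounds c H (x := y) hwy
      have howner : x.unpair.1 = y.unpair.1 := by
        have h1 := pkey_owner c (x := x) hwx
        have h2 := pkey_owner c (x := y) hwy
        rw [h1, h2] at hk
        exact (Nat.pair_eq_pair.1 hk).1
      rw [howner] at hbx ⊢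
      simp only [hwx, hwy, Bool.false_eq_true, Bool.true_eq_false, if_true, if_false,
        ite_true, ite_false]
      simp only [true_and, and_true, false_and, and_false, or_false, false_or]
      omega
  · constructor <;> (rintro (h | ⟨h, -⟩) <;> omega)

lemma kf_inj {x y : ℕ} (h : kf c H x = kf c H y) : x = y := by
  unfold kf at h
  rw [Prod.mk.injEq] at h
  obtain ⟨h1, h2⟩ := h
  cases hwx : isW c x <;> cases hwy : isW c y <;> rw [hwx, hwy] at h2 <;> simp at h2
  · rw [pkey_id c hwx, pkey_id c hwy] at h1; exact h1
  · have hby := isW_bounds c H (x := y) hwy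
    omega
  · have hbx := isW_bounds c H (x := x) hwx
    omega
  · have hbx := isW_bounds c H (x := x) hwx
    have hby := isW_bounds c H (x := y) hwy
    rw [pkey_owner c hwx, pkey_owner c hwy] at h1
    have howner : x.unpair.1 = y.unpair.1 := (Nat.pair_eq_pair.1 h1).1
    rw [howner] at h2 hbx
    have hss : x.unpair.2 = y.unpair.2 := by omega
    rw [← Nat.pair_unpair x, howner, hss, Nat.pair_unpair]

include H

lemma lb_trans {x y z : ℕ} (h1 : lb c x y = true) (h2 : lb c y z = true) :
    lb c x z = true :=
  (lb_iff c H).2 (rl_trans ((lb_iff c H).1 h1) ((lb_iff c H).1 h2))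

lemma lb_irrefl (x : ℕ) : ¬lb c x x = true := fun h => rl_irrefl _ ((lb_iff c H).1 h)

lemma lb_trichot (x y : ℕ) : lb c x y = true ∨ x = y ∨ lb c y x = true := by
  rcases rl_trichot (kf c H x) (kf c H y) with h | h | h
  · exact Or.inl ((lb_iff c H).2 h)
  · exact Or.inr (Or.inl (kf_inj c H h))
  · exact Or.inr (Or.inr ((lb_iff c H).2 h))

/-- Characterization of the element immediately above an anchor. -/
lemma succ_dec {n v : ℕ} (h1 : lb c (Nat.pair n 0) v = true)
    (h2 : ∀ m, ¬(lb c (Nat.pair n 0) m = true ∧ lb c m v = true)) :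
    decf c n v = nextc c H n := by
  by_cases hchg : ∃ s, chgP c n s
  · -- there is a change stage; the immediate successor is the last witness
    obtain ⟨s₀, hs₀⟩ := hchg
    set w := Nat.pair n (smax c H n) with hw
    have hwW : isW c w = true := isW_pair.2 (smax_chg c H hs₀)
    have hanchW : isW c (Nat.pair n 0) = false := isW_anchor c n
    have hpa : pkey c (Nat.pair n 0) = Nat.pair n 0 := pkey_id c hanchW
    have hpw : pkey c w = Nat.pair n 0 := by
      rw [pkey_owner c hwW, hw, Nat.unpair_pair]
    have hlaw : lb c (Nat.pair n 0) w = true := by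
      rw [lb_def, hpa, hpw, hanchW, hwW]
      simp
    -- minimality of w among elements above the anchor
    have hmin : ∀ y, lb c (Nat.pair n 0) y = true → y = w ∨ lb c w y = true := by
      intro y hy
      rw [lb_def, hpa] at hy
      simp only [Bool.or_eq_true, Bool.and_eq_true, decide_eq_true_iff, beq_iff_eq,
        Bool.not_eq_true', hanchW] at hy
      rcases hy with hy | ⟨hy1, hy2⟩
      · right
        rw [lb_def, hpw]
        simp only [Bool.or_eq_true, decide_eq_true_iff]
        exact Or.inl (by omega)
      · -- y has the same primary key as the anchor, so it is a witness for n
        rcases hy2 with ⟨-, hyW⟩ | ⟨hf, -⟩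
        swap
        · simp at hf
        have hyW' : isW c y = true := hyW
        have hyo : y.unpair.1 = n := by
          have := pkey_owner c hyW'
          rw [this] at hy1
          exact ((Nat.pair_eq_pair.1 hy1).1).symm
        have hychg : chgP c n y.unpair.2 := by
          have := isW_iff.1 hyW'
          rwa [hyo] at this
        have hyle : y.unpair.2 ≤ smax c H n := le_smax c H hychg
        rcases Nat.eq_or_lt_of_le hyle with he | hl
        · left
          rw [← Nat.pair_unpair y, hyo, he]
        · right
          have hpy : pkey c y = Nat.pair n 0 := hy1.symm
          rw [lb_def, hpw, hpy, hwW, hyW']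
          simp [hw, Nat.unpair_pair, hl]
    have hv : v = w := by
      rcases hmin v h1 with h | h
      · exact h
      · exact absurd ⟨hlaw, h⟩ (h2 w)
    rw [hv, decf_def, hw]
    simp only [Nat.unpair_pair]
    have : isW c (Nat.pair n (smax c H n)) = true := hwW
    rw [this]
    simp only [Nat.unpair_pair, beq_self_eq_true, Bool.and_true, cond_true]
    exact nx_smax c H hs₀
  · -- no change stage: the decoded value is n+1 = nextc n no matter what
    push_neg at hchg
    have hnc : nextc c H n = n + 1 := no_chg_nextc c H hchg
    rw [decf_def, hnc]
    rcases hb : (isW c v && (v.unpair.1 == n)) with _ | _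
    · rfl
    · exfalso
      rw [Bool.and_eq_true, beq_iff_eq] at hb
      have := isW_iff.1 hb.1
      rw [hb.2] at this
      exact hchg _ this

/-- Predecessor sets are finite: the order has type ω. -/
lemma finite_pred (x : ℕ) : {y : ℕ | lb c y x = true}.Finite := by
  set B := (Finset.range (pkey c x + 1)).sup (sbd c H) with hB
  have hsub : {y : ℕ | lb c y x = true} ⊆
      Set.Iic (pkey c x) ∪
        (fun p : ℕ × ℕ => Nat.pair p.1 p.2) '' (Set.Iic (pkey c x) ×ˢ Set.Iic B) := by
    intro y hy
    have hrl := (lb_iff c H).1 hy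
    have hfst : pkey c y ≤ pkey c x := by
      rcases hrl with h | ⟨h, -⟩ <;> [exact le_of_lt h; exact le_of_eq h]
    cases hyW : isW c y
    · left
      rw [Set.mem_Iic, ← pkey_id c hyW]
      exact hfst
    · right
      have hb := isW_bounds c H (x := y) hyW
      have ho : y.unpair.1 ≤ pkey c x := by
        have h1 : y.unpair.1 ≤ Nat.pair y.unpair.1 0 := Nat.left_le_pair _ _
        have h2 : Nat.pair y.unpair.1 0 = pkey c y := (pkey_owner c hyW).symm
        omega
      refine ⟨(y.unpair.1, y.unpair.2), ⟨?_, ?_⟩, Nat.pair_unpair y⟩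
      · exact ho
      · rw [Set.mem_Iic, hB]
        exact le_trans hb.2 (Finset.le_sup (Finset.mem_range.2 (by omega)))
  exact Set.Finite.subset (Set.Finite.union (Set.finite_Iic _)
    ((Set.Finite.prod (Set.finite_Iic _) (Set.finite_Iic _)).image _)) hsub

/-- rank of an element: number of predecessors. -/
noncomputable def rnk (x : ℕ) : ℕ := {y : ℕ | lb c y x = true}.ncard

lemma rnk_lt_of_lb {x y : ℕ} (h : lb c x y = true) : rnk c x < rnk c y := by
  apply Set.ncard_lt_ncard
  · constructor
    · intro z hz
      exact lb_trans c H hz h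
    · intro hsub
      exact lb_irrefl c H x (hsub h)
  · exact finite_pred c H y

lemma lb_iff_rnk {x y : ℕ} : lb c x y = true ↔ rnk c x < rnk c y := by
  constructor
  · exact rnk_lt_of_lb c H
  · intro h
    rcases lb_trichot c H x y with h' | h' | h'
    · exact h'
    · subst h'; omega
    · have := rnk_lt_of_lb c H h'
      omega

lemma rnk_injective : Function.Injective (rnk c) := by
  intro x y h
  rcases lb_trichot c H x y with h' | h' | h'
  · have := rnk_lt_of_lb c H h'; omega
  · exact h'
  · have := rnk_lt_of_lb c H h'; omega

omit H in
lemma exists_above (x : ℕ) : ∃ y, lb c x y = true := by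
  refine ⟨Nat.pair (pkey c x + 1) 0, ?_⟩
  have hW : isW c (Nat.pair (pkey c x + 1) 0) = false := isW_anchor c _
  have hpk : pkey c (Nat.pair (pkey c x + 1) 0) = Nat.pair (pkey c x + 1) 0 :=
    pkey_id c hW
  rw [lb_def, hpk]
  have : pkey c x < Nat.pair (pkey c x + 1) 0 :=
    lt_of_lt_of_le (by omega) (Nat.left_le_pair _ _)
  simp [this]

lemma rnk_surjective : Function.Surjective (rnk c) := by
  intro k
  -- first, find an element of rank ≥ k
  have hge : ∀ j : ℕ, ∃ x, j ≤ rnk c x := by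
    intro j
    induction j with
    | zero => exact ⟨0, Nat.zero_le _⟩
    | succ i ih =>
      obtain ⟨x, hx⟩ := ih
      obtain ⟨y, hy⟩ := exists_above c x
      exact ⟨y, by have := rnk_lt_of_lb c H hy; omega⟩
  obtain ⟨x, hx⟩ := hge k
  -- minimize rank over elements of rank ≥ k below-or-equal x
  have hTfin : ({z : ℕ | (lb c z x = true ∨ z = x) ∧ k ≤ rnk c z}).Finite := by
    apply Set.Finite.subset ((finite_pred c H x).union (Set.finite_singleton x))
    rintro z ⟨hz | hz, -⟩
    · exact Or.inl hz
    · exact Or.inr hz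
  have hTne : x ∈ hTfin.toFinset := by
    rw [Set.Finite.mem_toFinset]
    exact ⟨Or.inr rfl, hx⟩
  obtain ⟨y, hyT, hymin⟩ := Finset.exists_min_image hTfin.toFinset (rnk c) ⟨x, hTne⟩
  rw [Set.Finite.mem_toFinset] at hyT
  refine ⟨y, ?_⟩
  by_contra hne
  have hky : k < rnk c y := lt_of_le_of_ne hyT.2 (Ne.symm hne)
  -- y has a predecessor of maximal rank
  have hpne : {z : ℕ | lb c z y = true}.Nonempty := by
    rw [← Set.ncard_pos (finite_pred c H y)]
    have : rnk c y = {z : ℕ | lb c z y = true}.ncard := rfl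
    omega
  have hpredfinset : ((finite_pred c H y).toFinset).Nonempty := by
    obtain ⟨z, hz⟩ := hpne
    exact ⟨z, (Set.Finite.mem_toFinset _).2 hz⟩
  obtain ⟨z, hzmem, hzmax⟩ := Finset.exists_max_image (finite_pred c H y).toFinset
    (rnk c) hpredfinset
  rw [Set.Finite.mem_toFinset] at hzmem
  -- predecessors of y = predecessors of z together with z
  have hpred : {w : ℕ | lb c w y = true} = insert z {w : ℕ | lb c w z = true} := by
    ext w
    simp only [Set.mem_setOf_eq, Set.mem_insert_iff]
    constructor
    · intro hw
      have hwz := hzmax w ((Set.Finite.mem_toFinset _).2 hw)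
      rcases lb_trichot c H w z with h' | h' | h'
      · exact Or.inr h'
      · exact Or.inl h'
      · have := rnk_lt_of_lb c H h'
        omega
    · rintro (rfl | hw)
      · exact hzmem
      · exact lb_trans c H hw hzmem
  have hrnky : rnk c y = rnk c z + 1 := by
    unfold rnk
    rw [hpred, Set.ncard_insert_of_notMem (a := z) (s := {w : ℕ | lb c w z = true})
      (lb_irrefl c H z) (finite_pred c H z)]
  -- z also belongs to T and has smaller rank: contradiction with minimality
  have hzT : z ∈ hTfin.toFinset := by
    rw [Set.Finite.mem_toFinset]
    constructor
    · rcases hyT.1 with hy | rfl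
      · exact Or.inl (lb_trans c H hzmem hy)
      · exact Or.inl hzmem
    · omega
  have := hymin z hzT
  omega

end WithH
/-- If `W` is an infinite computable subset of a cohesive set `C`, contradiction. -/
lemma cohesive_no_computable_subset {C W : Set ℕ} (hCoh : _root_.Cohesive C)
    (hWC : W ⊆ C) (hWinf : W.Infinite) (hcomp : ComputablePred (· ∈ W)) : False := by
  obtain ⟨f, hf, hfW⟩ := ComputablePred.computable_iff.1 hcomp
  set p : ℕ → Prop := fun n => f n = true with hp
  have hpW : ∀ n, n ∈ W ↔ p n := by
    intro n
    exact iff_of_eq (congrFun hfW n)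
  have hpinf : (setOf p).Infinite := by
    apply Set.Infinite.mono _ hWinf
    intro n hn
    exact (hpW n).1 hn
  -- the counting function
  set cnt : ℕ → ℕ := fun m => Nat.rec 0 (fun k ih => ih + (bif f k then 1 else 0)) m with hcnt
  have hcnt_comp : Computable cnt := by
    have := Computable.nat_rec (f := fun m : ℕ => m) (g := fun _ : ℕ => 0)
      (h := fun (_ : ℕ) (q : ℕ × ℕ) => q.2 + (bif f q.1 then 1 else 0))
      Computable.id (Computable.const 0)
      ((Primrec.nat_add.to_comp.comp (Computable.snd.comp Computable.snd)
        (Computable.cond (hf.comp (Computable.fst.comp Computable.snd))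
          (Computable.const 1) (Computable.const 0))).to₂)
    exact this.of_eq fun n => by simp [hcnt]
  have hcnt_count : ∀ m, cnt m = Nat.count p m := by
    intro m
    induction m with
    | zero => simp [hcnt]
    | succ k ih =>
      rw [Nat.count_succ]
      show cnt k + (bif f k then 1 else 0) = _
      rw [ih]
      by_cases h : p k
      · have : f k = true := h
        simp [this, if_pos h]
      · have : f k = false := by
          cases hfk : f k
          · rfl
          · exact absurd hfk h
        simp [this, h]
  -- the splitting set
  set S : ℕ → Bool := fun m => f m && (cnt m % 2 == 0) with hS
  have hS_comp : Computable S := by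
    have h2 : Computable fun m => (cnt m % 2 == 0 : Bool) :=
      (Primrec.beq.to_comp).comp
        (Primrec.nat_mod.to_comp.comp hcnt_comp (Computable.const 2)) (Computable.const 0)
    exact (Primrec.dom_bool₂ (· && ·)).to_comp.comp hf h2
  have hS_ce : ∃ g : ℕ →. ℕ, Partrec g ∧ {m : ℕ | S m = true} = g.Dom := by
    have hre : REPred (fun m : ℕ => S m = true) := by
      apply ComputablePred.to_re
      exact ComputablePred.computable_iff.2 ⟨S, hS_comp, rfl⟩
    refine ⟨fun m => (Part.assert (S m = true) fun _ => Part.some ()).map fun _ => 0,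
      hre.map (Computable.const 0).to₂, ?_⟩
    ext m
    simp [PFun.Dom, Part.assert]
  rcases hCoh.2 _ hS_ce with hfin | hfin
  · -- but the even-indexed elements of p are in S ∩ C
    apply hfin.not_infinite
    apply Set.infinite_of_injective_forall_mem
      (f := fun k : ℕ => Nat.nth p (2 * k))
    · intro a b hab
      have := Nat.nth_injective hpinf hab
      omega
    · intro k
      refine ⟨?_, ?_⟩
      · show S (Nat.nth p (2 * k)) = true
        rw [hS]
        have h1 : f (Nat.nth p (2 * k)) = true := Nat.nth_mem_of_infinite hpinf _
        have h2 : cnt (Nat.nth p (2 * k)) = 2 * k := by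
          rw [hcnt_count, Nat.count_nth_of_infinite hpinf]
        simp [h1, h2, Nat.mul_mod_right]
      · exact hWC ((hpW _).2 (Nat.nth_mem_of_infinite hpinf _))
  · apply hfin.not_infinite
    apply Set.infinite_of_injective_forall_mem
      (f := fun k : ℕ => Nat.nth p (2 * k + 1))
    · intro a b hab
      have := Nat.nth_injective hpinf hab
      omega
    · intro k
      refine ⟨?_, ?_⟩
      · show ¬S (Nat.nth p (2 * k + 1)) = true
        rw [hS]
        have h2 : cnt (Nat.nth p (2 * k + 1)) = 2 * k + 1 := by
          rw [hcnt_count, Nat.count_nth_of_infinite hpinf]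
        simp [h2, Nat.add_mul_mod_self_left]
      · exact hWC ((hpW _).2 (Nat.nth_mem_of_infinite hpinf _))

section MainSec
variable {C : Set ℕ} (hCoh : _root_.Cohesive C) (c : Code)
  (hdom : ∀ m : ℕ, ((eval c) m).Dom ↔ m ∉ C)
include hCoh hdom

lemma exH : ∀ n : ℕ, ∃ m, n < m ∧ ¬((eval c) m).Dom := by
  intro n
  obtain ⟨m, hm, hlt⟩ := hCoh.1.exists_gt n
  exact ⟨m, hlt, fun h => (hdom m).1 h hm⟩


open scoped Classical

/-- The main contradiction: no partial computable function can compute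
`nextc` on almost all of `C`. -/
lemma main_contra (θ : ℕ →. ℕ) (hθ : Partrec θ)
    (hae : (C \ {n : ℕ | nextc c (exH hCoh c hdom) n ∈ θ n}).Finite) : False := by
  set H := exH hCoh c hdom with hH
  have hnext_mem : ∀ n, nextc c H n ∈ C := by
    intro n
    by_contra hn
    exact nextc_not_dom c H n ((hdom _).2 hn)
  -- bound on the exceptional set
  obtain ⟨N, hN⟩ := hae.bddAbove
  have hgood : ∀ n, n ∈ C → N < n → nextc c H n ∈ θ n := by
    intro n hn hlt
    by_contra hbad
    exact absurd (hN ⟨hn, hbad⟩) (by omega)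
  obtain ⟨c₀, hc₀C, hc₀gt⟩ := hCoh.1.exists_gt N
  -- the iterates of nextc starting at c₀
  set ν : ℕ → ℕ := fun k => (fun m => nextc c H m)^[k] c₀ with hν
  have hν0 : ν 0 = c₀ := rfl
  have hνs : ∀ k, ν (k + 1) = nextc c H (ν k) := by
    intro k
    rw [hν]
    exact Function.iterate_succ_apply' _ _ _
  have hνmem : ∀ k, ν k ∈ C ∧ N < ν k := by
    intro k
    induction k with
    | zero => exact ⟨hc₀C, hc₀gt⟩
    | succ j ih =>
      rw [hνs j]
      exact ⟨hnext_mem _, lt_trans ih.2 (nextc_gt c H (ν j))⟩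
  have hνmono : ∀ k, ν k < ν (k + 1) := fun k => by
    rw [hνs k]; exact nextc_gt c H (ν k)
  have hνge : ∀ k, c₀ ≤ ν k := by
    intro k
    induction k with
    | zero => exact le_refl _
    | succ j ih => have := hνmono j; omega
  have hθν : ∀ k, θ (ν k) = Part.some (ν (k + 1)) := by
    intro k
    rw [hνs k]
    exact Part.eq_some_iff.2 (hgood _ (hνmem k).1 (hνmem k).2)
  -- the orbit as a partial computable function
  set F : ℕ →. ℕ := fun k => Nat.rec (Part.some c₀) (fun _ ih => ih.bind θ) k with hF
  have hFpr : Partrec F := by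
    have h := Partrec.nat_rec (f := fun k : ℕ => k) (g := fun _ : ℕ => Part.some c₀)
      (h := fun (_ : ℕ) (q : ℕ × ℕ) => θ q.2) Computable.id (Partrec.const' _)
      ((hθ.comp ((Computable.snd.comp Computable.snd) :
        Computable fun q : ℕ × (ℕ × ℕ) => q.2.2)).to₂)
    exact h.of_eq fun k => rfl
  have hFval : ∀ k, F k = Part.some (ν k) := by
    intro k
    induction k with
    | zero => rw [hF]; rfl
    | succ j ih =>
      show (F j).bind θ = _
      rw [ih]; exact (Part.bind_some (ν j) θ).trans (hθν j)
  -- membership in the orbit is semidecidable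
  set G : ℕ →. ℕ := fun m => Nat.rfind fun k => (F k).map fun v => v == m with hG
  have hGpr : Partrec G := by
    apply Partrec.rfind
    exact ((hFpr.comp (Computable.snd : Computable fun q : ℕ × ℕ => q.2)).map
      (((Primrec.beq.to_comp).comp (Computable.snd : Computable fun q : (ℕ × ℕ) × ℕ => q.2)
        (Computable.fst.comp Computable.fst)).to₂))
  have hGdom : ∀ m, (G m).Dom ↔ ∃ k, ν k = m := by
    intro m
    rw [hG]
    simp only []
    refine Iff.trans Nat.rfind_dom ?_
    constructor
    · rintro ⟨k, hk, -⟩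
      rw [hFval k] at hk
      simp only [Part.map_some, Part.mem_some_iff] at hk
      exact ⟨k, by simpa using hk.symm⟩
    · rintro ⟨k, hk⟩
      refine ⟨k, ?_, ?_⟩
      · rw [hFval k]
        simp [hk]
      · intro m' _
        rw [hFval m']
        simp [Part.Dom]
  -- every element of C above c₀ is in the orbit
  have hsurj : ∀ m, m ∈ C → c₀ ≤ m → ∃ k, ν k = m := by
    intro m
    induction m using Nat.strong_induction_on with
    | _ m IH =>
      intro hmC hc₀m
      rcases Nat.eq_or_lt_of_le hc₀m with he | hlt
      · exact ⟨0, he⟩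
      · -- find the predecessor of m in C
        set P : ℕ → Prop := fun j => j ∈ C ∧ c₀ ≤ j with hP
        set q := Nat.findGreatest P (m - 1) with hq
        have hPc₀ : P c₀ := ⟨hc₀C, le_refl _⟩
        have hqspec : P q := Nat.findGreatest_spec (by omega) hPc₀
        have hqge : c₀ ≤ q := Nat.le_findGreatest (by omega) hPc₀
        have hqlt : q < m := by
          have := Nat.findGreatest_le (P := P) (m - 1)
          omega
        have hqgr : ∀ j, q < j → j < m → j ∉ C := by
          intro j hj1 hj2 hjC
          exact Nat.findGreatest_is_greatest hj1 (by omega) ⟨hjC, by omega⟩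
        have hnq : nextc c H q = m := by
          have hle : nextc c H q ≤ m := nextc_le c H hqlt (fun hd => (hdom m).1 hd hmC)
          rcases Nat.eq_or_lt_of_le hle with he | hl
          · exact he
          · exfalso
            have hmem := hnext_mem q
            exact hqgr _ (nextc_gt c H q) hl hmem
        obtain ⟨k, hk⟩ := IH q hqlt hqspec.1 hqge
        exact ⟨k + 1, by rw [hνs, hk, hnq]⟩
  -- W := C ∩ [c₀, ∞) is computable: contradiction
  set W : Set ℕ := {m | c₀ ≤ m ∧ m ∈ C} with hW
  have hWre : REPred (· ∈ W) := by
    have := hGpr.dom_re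
    apply this.of_eq
    intro m
    rw [hGdom]
    constructor
    · rintro ⟨k, rfl⟩
      exact ⟨hνge k, (hνmem k).1⟩
    · rintro ⟨h1, h2⟩
      exact hsurj m h2 h1
  have hWcre : REPred (· ∉ W) := by
    set g : ℕ →. ℕ := fun m => bif decide (m < c₀) then Part.some 0 else (eval c) m with hg
    have hgpr : Partrec g :=
      Partrec.cond ((Primrec.nat_lt.decide.to_comp).comp Computable.id (Computable.const c₀))
        (Partrec.const' _) (eval_part.comp (Computable.const c) Computable.id)
    have := hgpr.dom_re
    apply this.of_eq
    intro m
    rw [hg]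
    simp only []
    rcases Nat.lt_or_ge m c₀ with h | h
    · have hb : decide (m < c₀) = true := decide_eq_true h
      rw [hb]
      simp only [cond_true]
      constructor
      · intro _
        rw [hW]
        intro hx
        simp only [Set.mem_setOf_eq] at hx
        omega
      · intro _
        trivial
    · have : ¬(m < c₀) := by omega
      have hb : decide (m < c₀) = false := decide_eq_false this
      rw [hb]
      simp only [cond_false]
      rw [hdom m]
      constructor
      · intro hm hmW
        rw [hW] at hmW
        exact hm hmW.2
      · intro hm
        intro hmC
        exact hm ⟨h, hmC⟩
  have hWcomp : ComputablePred (· ∈ W) :=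
    ComputablePred.computable_iff_re_compl_re'.2 ⟨hWre, hWcre⟩
  have hWinf : W.Infinite := by
    apply Set.infinite_of_forall_exists_gt
    intro a
    obtain ⟨b, hbC, hab⟩ := hCoh.1.exists_gt (max a c₀)
    exact ⟨b, ⟨by omega, hbC⟩, by omega⟩
  exact cohesive_no_computable_subset hCoh (fun m hm => hm.2) hWinf hWcomp

end MainSec

section Power

variable {C : Set ℕ}

lemma ae_inter {S T : Set ℕ} (hS : (C \ S).Finite) (hT : (C \ T).Finite) :
    (C \ (S ∩ T)).Finite := by
  apply (hS.union hT).subset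
  intro n hn
  by_cases h : n ∈ S
  · exact Or.inr ⟨hn.1, fun ht => hn.2 ⟨h, ht⟩⟩
  · exact Or.inl ⟨hn.1, h⟩

lemma ae_nonempty (hCinf : C.Infinite) {S : Set ℕ} (h : (C \ S).Finite) :
    ∃ n, n ∈ C ∧ n ∈ S := by
  obtain ⟨n, hn⟩ := (hCinf.diff h).nonempty
  refine ⟨n, hn.1, ?_⟩
  by_contra hns
  exact hn.2 ⟨hn.1, hns⟩

lemma mk_exact {φ ψ : CohCarrier C} (h : CohPow.mk φ = CohPow.mk ψ) :
    eqAE C φ.1 ψ.1 := Quotient.exact h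

lemma exists_mk (z : CohPow C) : ∃ χ : CohCarrier C, CohPow.mk χ = z :=
  Quot.exists_rep z

/-- Characterization of the power relation for a relation ignoring its third argument. -/
lemma rel3_mk_iff {Rb : ℕ → ℕ → Prop} (φ ψ : CohCarrier C) (z : CohPow C) :
    CohPow.Rel3 C (fun a b _ => Rb a b) (CohPow.mk φ) (CohPow.mk ψ) z ↔
      (C \ {n | ∃ a b, a ∈ φ.1 n ∧ b ∈ ψ.1 n ∧ Rb a b}).Finite := by
  constructor
  · rintro ⟨φ₁, ψ₁, χ₁, hx, hy, -, hrel⟩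
    have e1 : eqAE C φ.1 φ₁.1 := mk_exact hx
    have e2 : eqAE C ψ.1 ψ₁.1 := mk_exact hy
    apply ((e1.union e2).union hrel).subset
    intro n hn
    by_cases h1 : n ∈ {n | ∃ a, a ∈ φ.1 n ∧ a ∈ φ₁.1 n}
    · by_cases h2 : n ∈ {n | ∃ a, a ∈ ψ.1 n ∧ a ∈ ψ₁.1 n}
      · refine Or.inr ⟨hn.1, fun hr => hn.2 ?_⟩
        obtain ⟨a, ha, ha₁⟩ := h1
        obtain ⟨b, hb, hb₁⟩ := h2
        obtain ⟨a', b', c', ha', hb', hc', hR⟩ := hr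
        rw [Part.mem_unique ha₁ ha'] at ha
        rw [Part.mem_unique hb₁ hb'] at hb
        exact ⟨a', b', ha, hb, hR⟩
      · exact Or.inl (Or.inr ⟨hn.1, h2⟩)
    · exact Or.inl (Or.inl ⟨hn.1, h1⟩)
  · intro h
    obtain ⟨χ, hχ⟩ := exists_mk z
    refine ⟨φ, ψ, χ, rfl, rfl, hχ.symm, ?_⟩
    apply (h.union χ.2.2).subset
    intro n hn
    by_cases h1 : n ∈ {n | ∃ a b, a ∈ φ.1 n ∧ b ∈ ψ.1 n ∧ Rb a b}
    · refine Or.inr ⟨hn.1, fun hd => hn.2 ?_⟩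
      obtain ⟨a, b, ha, hb, hR⟩ := h1
      exact ⟨a, b, (χ.1 n).get hd, ha, hb, Part.get_mem hd, hR⟩
    · exact Or.inl ⟨hn.1, h1⟩

/-- In the cohesive power of `(ℕ, <)`, every element has an immediate successor
(expressed via the 3-ary relation, third argument dummy). -/
lemma std_imm_succ (hCinf : C.Infinite) (x : CohPow C) :
    ∃ y : CohPow C, CohPow.Rel3 C (fun a b _ => a < b) x y y ∧
      ∀ z : CohPow C, ¬(CohPow.Rel3 C (fun a b _ => a < b) x z z ∧
        CohPow.Rel3 C (fun a b _ => a < b) z y y) := by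
  obtain ⟨φ, hφ⟩ := exists_mk x
  have hsuccpr : Partrec fun n => (φ.1 n).map fun v => v + 1 :=
    φ.2.1.map (((Primrec.nat_add.comp Primrec.snd (Primrec.const 1)).to_comp).to₂)
  set ψ : CohCarrier C := ⟨fun n => (φ.1 n).map fun v => v + 1, hsuccpr, by
    apply φ.2.2.subset
    intro n hn
    refine ⟨hn.1, fun hd => hn.2 ?_⟩
    simpa [PFun.Dom] using hd⟩ with hψ
  refine ⟨CohPow.mk ψ, ?_, ?_⟩
  · rw [← hφ]
    rw [rel3_mk_iff]
    apply φ.2.2.subset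
    intro n hn
    refine ⟨hn.1, fun hd => hn.2 ?_⟩
    have hd' : (φ.1 n).Dom := hd
    exact ⟨(φ.1 n).get hd', (φ.1 n).get hd' + 1, Part.get_mem hd',
      Part.mem_map _ (Part.get_mem hd'), by omega⟩
  · intro z
    rintro ⟨h1, h2⟩
    obtain ⟨χ, hχ⟩ := exists_mk z
    rw [← hφ, ← hχ, rel3_mk_iff] at h1
    rw [← hχ, rel3_mk_iff] at h2
    obtain ⟨n, hnC, hn1, hn2⟩ : ∃ n, n ∈ C ∧
        n ∈ {n | ∃ a b, a ∈ φ.1 n ∧ b ∈ χ.1 n ∧ a < b} ∧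
        n ∈ {n | ∃ a b, a ∈ χ.1 n ∧ b ∈ ψ.1 n ∧ a < b} := by
      obtain ⟨n, hnC, hn⟩ := ae_nonempty hCinf (ae_inter h1 h2)
      exact ⟨n, hnC, hn.1, hn.2⟩
    obtain ⟨a, b, ha, hb, hab⟩ := hn1
    obtain ⟨b', sa, hb', hsa, hbsa⟩ := hn2
    rw [Part.mem_unique hb hb'] at hab
    obtain ⟨a', ha', heq⟩ := (Part.mem_map_iff _).1 hsa
    rw [Part.mem_unique ha ha'] at hab
    omega

end Power

end CPW

/-- For every co-maximal set `C` there are isomorphic computable structures `(ℕ, P)`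
and `(ℕ, Q)` (one ternary relation) with non-isomorphic cohesive powers over `C`. -/
theorem exists_isomorphic_structures_nonisomorphic_powers (C : Set ℕ)
    (hC : CoMaximal C) :
    ∃ P Q : ℕ → ℕ → ℕ → Prop, ComputableRel3 P ∧ ComputableRel3 Q ∧
      (∃ g : ℕ ≃ ℕ, ∀ a b c, P a b c ↔ Q (g a) (g b) (g c)) ∧
      ¬ ∃ e : CohPow C ≃ CohPow C,
          ∀ x y z : CohPow C,
            CohPow.Rel3 C P x y z ↔ CohPow.Rel3 C Q (e x) (e y) (e z) := by
  classical
  obtain ⟨hCoh, f, hfpr, hfdom⟩ := hC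
  obtain ⟨cd, hcd⟩ := Nat.Partrec.Code.exists_code.1 (Partrec.nat_iff.1 hfpr)
  have hdom : ∀ m : ℕ, ((Nat.Partrec.Code.eval cd) m).Dom ↔ m ∉ C := by
    intro m
    rw [hcd]
    have : m ∈ Cᶜ ↔ m ∈ f.Dom := by rw [hfdom]
    constructor
    · intro h
      exact this.2 h
    · intro h
      exact this.1 h
  set H : ∀ n : ℕ, ∃ m, n < m ∧ ¬((Nat.Partrec.Code.eval cd) m).Dom :=
    CPW.exH hCoh cd hdom with hH
  refine ⟨fun a b _ => a < b, fun a b _ => CPW.lb cd a b = true, ?_, ?_, ?_, ?_⟩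
  · refine ⟨fun t => decide (t.1 < t.2.1), ?_, ?_⟩
    · exact (Primrec.nat_lt.comp Primrec.fst (Primrec.fst.comp Primrec.snd)).decide.to_comp
    · intro a b c
      simp
  · refine ⟨fun t => CPW.lb cd t.1 t.2.1, ?_, ?_⟩
    · exact (CPW.lb_computable cd).comp Computable.fst (Computable.fst.comp Computable.snd)
    · intro a b c
      simp
  · -- the two base structures are isomorphic
    have hbij : Function.Bijective (CPW.rnk cd) :=
      ⟨CPW.rnk_injective cd H, CPW.rnk_surjective cd H⟩
    refine ⟨(Equiv.ofBijective _ hbij).symm, ?_⟩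
    intro a b _
    have ha : CPW.rnk cd ((Equiv.ofBijective _ hbij).symm a) = a :=
      Equiv.ofBijective_apply_symm_apply _ hbij a
    have hb : CPW.rnk cd ((Equiv.ofBijective _ hbij).symm b) = b :=
      Equiv.ofBijective_apply_symm_apply _ hbij b
    have := CPW.lb_iff_rnk cd H (x := (Equiv.ofBijective _ hbij).symm a)
      (y := (Equiv.ofBijective _ hbij).symm b)
    rw [ha, hb] at this
    exact this.symm
  · -- the cohesive powers are not isomorphic
    rintro ⟨e, he⟩
    have hCinf : C.Infinite := hCoh.1
    -- the sequence of anchors as an element of the power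
    have hApr : Partrec fun n : ℕ => Part.some (Nat.pair n 0) := by
      have : Computable fun n : ℕ => Nat.pair n 0 :=
        Primrec₂.natPair.to_comp.comp Computable.id (Computable.const 0)
      exact this
    set A : CohCarrier C := ⟨fun n => Part.some (Nat.pair n 0), hApr, by
      have : (PFun.Dom fun n : ℕ => Part.some (Nat.pair n 0)) = Set.univ := by
        ext n; simp [PFun.Dom]
      rw [this, Set.diff_univ]
      exact Set.finite_empty⟩ with hA
    set xA : CohPow C := CohPow.mk A with hxA
    -- transport the immediate-successor property through e
    obtain ⟨y, hy1, hy2⟩ := CPW.std_imm_succ hCinf (e.symm xA)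
    have hlt : CohPow.Rel3 C (fun a b _ => CPW.lb cd a b = true) xA (e y) (e y) := by
      have := (he _ y y).1 hy1
      rwa [Equiv.apply_symm_apply] at this
    have hnomid : ∀ z', ¬(CohPow.Rel3 C (fun a b _ => CPW.lb cd a b = true) xA z' z' ∧
        CohPow.Rel3 C (fun a b _ => CPW.lb cd a b = true) z' (e y) (e y)) := by
      rintro z' ⟨hz1, hz2⟩
      apply hy2 (e.symm z')
      constructor
      · apply (he _ _ _).2
        simpa only [Equiv.apply_symm_apply] using hz1
      · apply (he _ _ _).2
        simpa only [Equiv.apply_symm_apply] using hz2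
    obtain ⟨ψ, hψ⟩ := CPW.exists_mk (e y)
    rw [hxA, ← hψ, CPW.rel3_mk_iff] at hlt
    -- search for middle elements
    set χfun : ℕ →. ℕ := fun n => (ψ.1 n).bind fun v =>
      Nat.rfind fun m => Part.some (CPW.lb cd (Nat.pair n 0) m && CPW.lb cd m v) with hχfun
    have hχpr : Partrec χfun := by
      apply ψ.2.1.bind
      have hin : Computable₂ fun (q : ℕ × ℕ) (m : ℕ) =>
          (CPW.lb cd (Nat.pair q.1 0) m && CPW.lb cd m q.2) := by
        have c1 : Computable fun p : (ℕ × ℕ) × ℕ => CPW.lb cd (Nat.pair p.1.1 0) p.2 :=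
          (CPW.lb_computable cd).comp
            (Primrec₂.natPair.to_comp.comp (Computable.fst.comp Computable.fst)
              (Computable.const 0)) Computable.snd
        have c2 : Computable fun p : (ℕ × ℕ) × ℕ => CPW.lb cd p.2 p.1.2 :=
          (CPW.lb_computable cd).comp Computable.snd
            (Computable.snd.comp Computable.fst)
        exact ((Primrec.dom_bool₂ (· && ·)).to_comp.comp c1 c2).to₂
      exact Partrec.rfind hin.partrec₂
    have hWce : CESet (PFun.Dom χfun) := ⟨χfun, hχpr, rfl⟩
    rcases hCoh.2 _ hWce with hfin | hfin
    · -- no middles almost everywhere: ψ computes the successor of the anchors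
      set θ : ℕ →. ℕ := fun n => (ψ.1 n).map fun v => CPW.decf cd n v with hθ
      have hθpr : Partrec θ := ψ.2.1.map (CPW.decf_computable cd)
      apply CPW.main_contra hCoh cd hdom θ hθpr
      have hDomC : (C \ (PFun.Dom χfun)ᶜ).Finite := by
        apply hfin.subset
        intro n hn
        exact ⟨not_not.1 hn.2, hn.1⟩
      have hsub : {n : ℕ | ∃ a b, a ∈ A.1 n ∧ b ∈ ψ.1 n ∧ CPW.lb cd a b = true} ∩
          (PFun.Dom χfun)ᶜ ⊆ {n : ℕ | CPW.nextc cd H n ∈ θ n} := by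
        rintro n ⟨hS1, hnd⟩
        obtain ⟨a, b, ha, hb, hab⟩ := hS1
        have haa : a = Nat.pair n 0 := by
          rw [hA] at ha
          simpa using Part.mem_unique ha (Part.mem_some _)
        rw [haa] at hab
        have hmid : ∀ m, ¬(CPW.lb cd (Nat.pair n 0) m = true ∧ CPW.lb cd m b = true) := by
          rintro m ⟨hm1, hm2⟩
          apply hnd
          have hrd : (Nat.rfind fun m => Part.some
              (CPW.lb cd (Nat.pair n 0) m && CPW.lb cd m b)).Dom := by
            refine Nat.rfind_dom.2 ?_
            exact ⟨m, by simp [hm1, hm2], fun {_} _ => trivial⟩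
          obtain ⟨k, hk⟩ := Part.dom_iff_mem.1 hrd
          have : k ∈ χfun n := Part.mem_bind_iff.2 ⟨b, hb, hk⟩
          exact Part.dom_iff_mem.2 ⟨k, this⟩
        have hdec : CPW.decf cd n b = CPW.nextc cd H n := CPW.succ_dec cd H hab hmid
        show CPW.nextc cd H n ∈ θ n
        rw [hθ, ← hdec]
        exact Part.mem_map _ hb
      apply ((CPW.ae_inter hlt hDomC).subset)
      exact Set.diff_subset_diff_right hsub
    · -- middles exist almost everywhere: contradiction with no-middle
      have hdomfin : (C \ PFun.Dom χfun).Finite :=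
        hfin.subset fun n hn => ⟨hn.2, hn.1⟩
      set z : CohCarrier C := ⟨χfun, hχpr, hdomfin⟩ with hz
      apply hnomid (CohPow.mk z)
      have hval : ∀ n, n ∈ PFun.Dom χfun → ∃ m v, m ∈ χfun n ∧ v ∈ ψ.1 n ∧
          CPW.lb cd (Nat.pair n 0) m = true ∧ CPW.lb cd m v = true := by
        intro n hd
        obtain ⟨m, hm⟩ := Part.dom_iff_mem.1 (hd : (χfun n).Dom)
        obtain ⟨v, hv, hmr⟩ := Part.mem_bind_iff.1 hm
        have hspec := Nat.rfind_spec hmr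
        simp only [Part.mem_some_iff] at hspec
        have hspec' := hspec.symm
        rw [Bool.and_eq_true] at hspec'
        exact ⟨m, v, hm, hv, hspec'.1, hspec'.2⟩
      constructor
      · rw [hxA, CPW.rel3_mk_iff]
        apply hdomfin.subset
        intro n hn
        refine ⟨hn.1, fun hd => hn.2 ?_⟩
        obtain ⟨m, v, hm, hv, h1, h2⟩ := hval n hd
        exact ⟨Nat.pair n 0, m, by rw [hA]; exact Part.mem_some _, hm, h1⟩
      · rw [← hψ, CPW.rel3_mk_iff]
        apply hdomfin.subset
        intro n hn
        refine ⟨hn.1, fun hd => hn.2 ?_⟩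
        obtain ⟨m, v, hm, hv, h1, h2⟩ := hval n hd
        exact ⟨m, v, hm, hv, h2⟩
end
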